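/- arXiv:1308.6420 — 8 statements merged into one kernel-verified Lean document; each statement's English description precedes it below -/
import Mathlib

section
/- Let H be a real Hilbert space, E ⊆ H a set, c ∈ (0,1), M > 1, λ > 1, and let f : [0,1] → H be a C¹ curve with ‖f'(t)‖ ≤ M for all t. Suppose x ∈ (0,1), h ∈ H, d > 0 and r > 0 satisfy d = ‖h − f(x)‖, I := [x−λd, x+λd] ⊂ (0,1), B(h,r) ∩ E = ∅ and r > c·d. Define ψ : I → H by ψ(t) = (1 − |t−x|/(λd))·(h − f(x)). Then (f+ψ)(x) = h, and there exists an open interval R with x ∈ R ⊆ (x − λd/2, x + λd/2) (so the closure of R contains neither endpoint of I) such that (f+ψ)(R) ⊆ B(h,r) ⊆ H∖E and |R| ≥ (c/(4Mλ))·|I|, where |I| = 2λd is the length of I. -/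
open Set MeasureTheory Metric Topology

noncomputable section

/-- Pushing a `C¹` curve into a hole of `E`: with
`ψ(t) = (1 − |t−x|/(λd))·(h − f(x))` one has `(f+ψ)(x) = h`, and there is an open
interval `R ∋ x`, `R ⊆ (x − λd/2, x + λd/2)`, with `(f+ψ)(R) ⊆ B(h,r) ⊆ H∖E` and
`|R| ≥ (c/(4Mλ))·|I|`, where `|I| = 2λd`. -/
theorem push_into_hole {H : Type*} [NormedAddCommGroup H] [InnerProductSpace ℝ H]
    [CompleteSpace H] (E : Set H) {c M lam : ℝ}
    (hc : c ∈ Ioo (0:ℝ) 1) (hM : 1 < M) (hlam : 1 < lam)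
    {f : ℝ → H} (hf : ContDiffOn ℝ 1 f (Icc 0 1))
    (hf' : ∀ t ∈ Icc (0:ℝ) 1, ‖derivWithin f (Icc 0 1) t‖ ≤ M)
    {x d r : ℝ} {h : H} (hx : x ∈ Ioo (0:ℝ) 1) (hd : 0 < d) (hdh : d = ‖h - f x‖)
    (hI : Icc (x - lam * d) (x + lam * d) ⊆ Ioo (0:ℝ) 1)
    (hr : 0 < r) (hhole : Metric.ball h r ∩ E = ∅) (hrc : r > c * d) :
    f x + (1 - |x - x| / (lam * d)) • (h - f x) = h ∧
    ∃ a b : ℝ, a < x ∧ x < b ∧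
      Ioo a b ⊆ Ioo (x - lam * d / 2) (x + lam * d / 2) ∧
      (∀ t ∈ Ioo a b,
        f t + (1 - |t - x| / (lam * d)) • (h - f x) ∈ Metric.ball h r) ∧
      Metric.ball h r ⊆ Eᶜ ∧
      b - a ≥ c / (4 * M * lam) * (2 * lam * d) := by
  have hM0 : (0:ℝ) < M := lt_trans one_pos hM
  have hlam0 : (0:ℝ) < lam := lt_trans one_pos hlam
  have hc0 : 0 < c := hc.1
  have hc1 : c < 1 := hc.2
  have hδ : 0 < c * d / (4 * M) := by positivity
  constructor
  · simp
  refine ⟨x - c * d / (4 * M), x + c * d / (4 * M), by linarith, by linarith, ?_, ?_, ?_, ?_⟩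
  · -- subset of (x - λd/2, x + λd/2)
    have hle : c * d / (4 * M) ≤ lam * d / 2 := by
      rw [div_le_div_iff₀ (by positivity) two_pos]; nlinarith [mul_lt_mul_of_pos_left hM (mul_pos hlam0 hd), mul_lt_mul_of_pos_right hlam hd, mul_lt_mul_of_pos_right hc1 hd]
    apply Ioo_subset_Ioo <;> linarith
  · intro t ht
    have htx : |t - x| < c * d / (4 * M) := by
      rw [abs_lt]; constructor <;> [linarith [ht.1]; linarith [ht.2]]
    have htI : t ∈ Icc (x - lam * d) (x + lam * d) := by
      have h1 : |t - x| < lam * d := by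
        have hle : c * d / (4 * M) ≤ lam * d / 2 := by
          rw [div_le_div_iff₀ (by positivity) two_pos]; nlinarith [mul_lt_mul_of_pos_left hM (mul_pos hlam0 hd), mul_lt_mul_of_pos_right hlam hd, mul_lt_mul_of_pos_right hc1 hd]
        have : 0 < lam * d := by positivity
        linarith
      rw [abs_lt] at h1
      constructor <;> [linarith [h1.1]; linarith [h1.2]]
    have ht01 : t ∈ Icc (0:ℝ) 1 := Ioo_subset_Icc_self (hI htI)
    have hx01 : x ∈ Icc (0:ℝ) 1 := Ioo_subset_Icc_self hx
    have hfl : ‖f t - f x‖ ≤ M * ‖t - x‖ :=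
      Convex.norm_image_sub_le_of_norm_derivWithin_le (hf.differentiableOn one_ne_zero) hf'
        (convex_Icc 0 1) hx01 ht01
    rw [Metric.mem_ball, dist_eq_norm]
    have hkey : f t + (1 - |t - x| / (lam * d)) • (h - f x) - h
        = (f t - f x) - (|t - x| / (lam * d)) • (h - f x) := by
      have : (1 - |t - x| / (lam * d)) • (h - f x)
          = (h - f x) - (|t - x| / (lam * d)) • (h - f x) := by
        rw [sub_smul, one_smul]
      rw [this]; abel
    rw [hkey]
    have hn2 : ‖(|t - x| / (lam * d)) • (h - f x)‖ = |t - x| / lam := by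
      rw [norm_smul, ← hdh, Real.norm_eq_abs, abs_of_nonneg (by positivity)]
      field_simp
    calc ‖(f t - f x) - (|t - x| / (lam * d)) • (h - f x)‖
        ≤ ‖f t - f x‖ + ‖(|t - x| / (lam * d)) • (h - f x)‖ := norm_sub_le _ _
      _ ≤ M * ‖t - x‖ + |t - x| / lam := by rw [hn2]; linarith
      _ < r := by
          rw [Real.norm_eq_abs]
          have h1 : |t - x| / lam ≤ |t - x| := by
            rw [div_le_iff₀ hlam0]; nlinarith [abs_nonneg (t - x)]
          have h2 : M * |t - x| + |t - x| ≤ 2 * M * |t - x| := by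
            nlinarith [abs_nonneg (t - x)]
          have h3 : 2 * M * |t - x| < 2 * M * (c * d / (4 * M)) := by
            apply mul_lt_mul_of_pos_left htx (by positivity)
          have h4 : 2 * M * (c * d / (4 * M)) = c * d / 2 := by field_simp; ring
          nlinarith
  · intro y hy hyE
    have : y ∈ (∅ : Set H) := hhole ▸ ⟨hy, hyE⟩
    exact this
  · have : x + c * d / (4 * M) - (x - c * d / (4 * M)) = c * d / (2 * M) := by ring
    rw [this, ge_iff_le]
    rw [div_mul_eq_mul_div, div_le_div_iff₀ (by positivity) (by positivity)]
    ring_nf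
    nlinarith
end
end

section
/- Let H be a real Hilbert space, E ⊆ H a set, c ∈ (0,1), M > 1, λ > 1, θ > 0, and let f : [0,1] → H be a C¹ curve with ‖f'(t)‖ ≤ M for all t. Let K ≥ 1 and let I₁, …, I_K be pairwise disjoint closed intervals with I_k = [x_k − λd_k, x_k + λd_k] ⊂ (0,1), where for each k there exist h_k ∈ H and r_k > 0 with d_k = ‖h_k − f(x_k)‖ ∈ (0, θ), B(h_k, r_k) ∩ E = ∅ and r_k > c·d_k. Then there exist a C¹ curve g : [0,1] → H and, for each k, an open subinterval R_k ⊆ I_k and an open ball B_k ⊆ H such that: (1) g(t) = f(t) whenever t ∉ ⋃_{k=1}^{K} I_k; (2) sup_{t}‖g(t) − f(t)‖ < θ; (3) sup_{t}‖g'(t) − f'(t)‖ ≤ 2/λ; (4) |R_k| ≥ (c/(4Mλ))·|I_k| for each k; and (5) g(R_k) ⊆ B_k ⊆ H∖E for each k. -/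
open Set MeasureTheory Metric Topology

noncomputable section

private lemma sq_max_hasDerivAt (s : ℝ) :
    HasDerivAt (fun y : ℝ => (max y 0) ^ 2) (2 * max s 0) s := by
  rcases lt_trichotomy s 0 with hs | rfl | hs
  · have he : (fun y : ℝ => (max y 0) ^ 2) =ᶠ[𝓝 s] fun _ => (0:ℝ) := by
      filter_upwards [eventually_lt_nhds hs] with y hy
      simp [max_eq_right hy.le]
    rw [max_eq_right hs.le, mul_zero]
    exact (he.hasDerivAt_iff).mpr (hasDerivAt_const s 0)
  · have h0 : (2:ℝ) * max (0:ℝ) 0 = 0 := by simp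
    rw [h0, hasDerivAt_iff_isLittleO, Asymptotics.isLittleO_iff]
    intro c hc
    filter_upwards [Metric.ball_mem_nhds (0:ℝ) hc] with y hy
    rw [mem_ball_zero_iff, Real.norm_eq_abs] at hy
    have h1 : (0:ℝ) ≤ max y 0 := le_max_right _ _
    have h2 : max y 0 ≤ |y| := max_le (le_abs_self y) (abs_nonneg y)
    simp only [sub_zero, smul_zero, max_self, Real.norm_eq_abs]
    rw [zero_pow (by norm_num), sub_zero, abs_of_nonneg (sq_nonneg _)]
    nlinarith [abs_nonneg y]
  · have he : (fun y : ℝ => (max y 0) ^ 2) =ᶠ[𝓝 s] fun y => y ^ 2 := by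
      filter_upwards [eventually_gt_nhds hs] with y hy
      simp [max_eq_left hy.le]
    rw [max_eq_left hs.le]
    exact (he.hasDerivAt_iff).mpr (by simpa using hasDerivAt_pow 2 s)

private lemma bump_deriv_key (u : ℝ) : 4 * |u| * max (1 - u ^ 2) 0 ≤ 2 := by
  rcases le_or_gt (1 - u ^ 2) 0 with hle | hlt
  · rw [max_eq_right hle, mul_zero]; norm_num
  · rw [max_eq_left hlt.le]
    nlinarith [abs_nonneg u, sq_abs u, mul_nonneg (abs_nonneg u) (sq_nonneg (2 * |u| - 1)),
      sq_nonneg (|u| - 5 / 8)]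

private lemma bump_close_key (u : ℝ) : 1 - (max (1 - u ^ 2) 0) ^ 2 ≤ 2 * u ^ 2 := by
  rcases le_or_gt (1 - u ^ 2) 0 with hle | hlt
  · rw [max_eq_right hle]; nlinarith
  · rw [max_eq_left hlt.le]; nlinarith [sq_nonneg (u ^ 2)]

set_option maxHeartbeats 2000000 in
/-- Given pairwise disjoint intervals `I_k = [x_k − λd_k, x_k + λd_k] ⊂ (0,1)`
corresponding to holes `B(h_k, r_k)` of `E` (with `d_k = ‖h_k − f(x_k)‖ ∈ (0,θ)` and
`r_k > c·d_k`), there is a `C¹` curve `g` agreeing with `f` off `⋃ I_k`, uniformly `θ`-close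
to `f`, with `‖g' − f'‖ ≤ 2/λ`, and for each `k` an open subinterval `R_k ⊆ I_k` with
`|R_k| ≥ (c/(4Mλ))·|I_k|` and `g(R_k) ⊆ B_k ⊆ H∖E` for some open ball `B_k`. -/
theorem avoid_porous_on_intervals {H : Type*} [NormedAddCommGroup H]
    [InnerProductSpace ℝ H] [CompleteSpace H] (E : Set H) {c M lam θ : ℝ}
    (hc : c ∈ Ioo (0:ℝ) 1) (hM : 1 < M) (hlam : 1 < lam) (hθ : 0 < θ)
    {f : ℝ → H} (hf : ContDiffOn ℝ 1 f (Icc 0 1))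
    (hf' : ∀ t ∈ Icc (0:ℝ) 1, ‖derivWithin f (Icc 0 1) t‖ ≤ M)
    {K : ℕ} (hK : 1 ≤ K) {x d : ℕ → ℝ} {h : ℕ → H} {r : ℕ → ℝ}
    (hd : ∀ k < K, 0 < d k ∧ d k < θ ∧ d k = ‖h k - f (x k)‖)
    (hI : ∀ k < K, Icc (x k - lam * d k) (x k + lam * d k) ⊆ Ioo (0:ℝ) 1)
    (hr : ∀ k < K, 0 < r k ∧ Metric.ball (h k) (r k) ∩ E = ∅ ∧ r k > c * d k)
    (hdisj : ∀ k < K, ∀ l < K, k ≠ l →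
      Disjoint (Icc (x k - lam * d k) (x k + lam * d k))
        (Icc (x l - lam * d l) (x l + lam * d l))) :
    ∃ g : ℝ → H, ContDiffOn ℝ 1 g (Icc 0 1) ∧
      (∀ t ∈ Icc (0:ℝ) 1,
        t ∉ (⋃ k < K, Icc (x k - lam * d k) (x k + lam * d k)) → g t = f t) ∧
      (∀ t ∈ Icc (0:ℝ) 1, ‖g t - f t‖ < θ) ∧
      (∀ t ∈ Icc (0:ℝ) 1,
        ‖derivWithin g (Icc 0 1) t - derivWithin f (Icc 0 1) t‖ ≤ 2 / lam) ∧
      (∀ k < K, ∃ a b : ℝ,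
        Ioo a b ⊆ Icc (x k - lam * d k) (x k + lam * d k) ∧
        b - a ≥ c / (4 * M * lam) * (2 * lam * d k) ∧
        ∃ z : H, ∃ ρ : ℝ, 0 < ρ ∧
          (∀ t ∈ Ioo a b, g t ∈ Metric.ball z ρ) ∧ Metric.ball z ρ ⊆ Eᶜ) := by
  obtain ⟨hc0, hc1⟩ := hc
  have hlam0 : (0:ℝ) < lam := lt_trans one_pos hlam
  have hM0 : (0:ℝ) < M := lt_trans one_pos hM
  set w : ℕ → ℝ := fun k => lam * d k with hw
  set p : ℕ → ℝ → ℝ := fun k t => 1 - ((t - x k) / w k) ^ 2 with hp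
  set φ : ℕ → ℝ → ℝ := fun k t => (max (p k t) 0) ^ 2 with hφ
  set ψ : ℕ → ℝ → ℝ := fun k t => 2 * max (p k t) 0 * (-(2 * (t - x k) / (w k) ^ 2)) with hψ
  set v : ℕ → H := fun k => h k - f (x k) with hv
  set s : ℝ → H := fun t => ∑ k ∈ Finset.range K, φ k t • v k with hsdef
  set s' : ℝ → H := fun t => ∑ k ∈ Finset.range K, ψ k t • v k with hs'def
  -- basic positivity
  have hwpos : ∀ k < K, 0 < w k := fun k hk => mul_pos hlam0 (hd k hk).1
  have hvnorm : ∀ k < K, ‖v k‖ = d k := fun k hk => ((hd k hk).2.2).symm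
  -- derivatives
  have hder_p : ∀ k t, HasDerivAt (p k) (-(2 * (t - x k) / (w k) ^ 2)) t := by
    intro k t
    have h1 : HasDerivAt (fun t => (t - x k) / w k) (1 / w k) t := by
      simpa using ((hasDerivAt_id t).sub_const (x k)).div_const (w k)
    have h3 := (h1.pow 2).const_sub 1
    exact h3.congr_deriv (by ring)
  have hder_φ : ∀ k t, HasDerivAt (φ k) (ψ k t) t := by
    intro k t
    exact (sq_max_hasDerivAt (p k t)).comp t (hder_p k t)
  have hder_s : ∀ t, HasDerivAt s (s' t) t := by
    intro t
    exact HasDerivAt.fun_sum fun k _ => (hder_φ k t).smul_const (v k)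
  have hcont_s' : Continuous s' := by
    refine continuous_finset_sum _ fun k _ => Continuous.smul ?_ continuous_const
    exact ((continuous_const.mul ((continuous_const.sub
        (((continuous_id.sub continuous_const).div_const _).pow 2)).max continuous_const)).mul
      (((continuous_const.mul (continuous_id.sub continuous_const)).div_const _).neg))
  have hcs : ContDiff ℝ 1 s := by
    rw [contDiff_one_iff_deriv]
    refine ⟨fun t => (hder_s t).differentiableAt, ?_⟩
    have hds : deriv s = s' := funext fun t => (hder_s t).deriv
    rw [hds]; exact hcont_s'
  -- zero outside the interval
  have hpneg : ∀ k, k < K → ∀ t, t ∉ Icc (x k - lam * d k) (x k + lam * d k) → p k t < 0 := by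
    intro k hk t ht
    have hwk := hwpos k hk
    have habs : w k < |t - x k| := by
      rw [mem_Icc, not_and_or] at ht
      rcases ht with h1 | h1 <;> push_neg at h1
      · calc w k < x k - t := by show lam * d k < x k - t; linarith
          _ ≤ |x k - t| := le_abs_self _
          _ = |t - x k| := abs_sub_comm _ _
      · calc w k < t - x k := by show lam * d k < t - x k; linarith
          _ ≤ |t - x k| := le_abs_self _
    have h1 : 1 < |(t - x k) / w k| := by
      rw [abs_div, abs_of_pos hwk, lt_div_iff₀ hwk, one_mul]
      exact habs
    simp only [hp]
    nlinarith [h1, sq_abs ((t - x k) / w k), abs_nonneg ((t - x k) / w k)]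
  have hφ_zero : ∀ k, k < K → ∀ t, t ∉ Icc (x k - lam * d k) (x k + lam * d k) →
      φ k t = 0 ∧ ψ k t = 0 := by
    intro k hk t ht
    have hneg := hpneg k hk t ht
    constructor
    · simp only [hφ, max_eq_right hneg.le]; norm_num
    · simp only [hψ, max_eq_right hneg.le]; ring
  -- collapsing the sums
  have hcollapse : ∀ k, k < K → ∀ t, t ∈ Icc (x k - lam * d k) (x k + lam * d k) →
      s t = φ k t • v k ∧ s' t = ψ k t • v k := by
    intro k hk t ht
    have hz : ∀ l ∈ Finset.range K, l ≠ k →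
        φ l t = 0 ∧ ψ l t = 0 := by
      intro l hl hne
      have hl' := Finset.mem_range.mp hl
      have hdis := hdisj l hl' k hk hne
      exact hφ_zero l hl' t (fun h' => Set.disjoint_left.mp hdis h' ht)
    constructor
    · rw [hsdef]
      exact Finset.sum_eq_single_of_mem k (Finset.mem_range.mpr hk)
        (fun l hl hne => by rw [(hz l hl hne).1, zero_smul])
    · rw [hs'def]
      exact Finset.sum_eq_single_of_mem k (Finset.mem_range.mpr hk)
        (fun l hl hne => by rw [(hz l hl hne).2, zero_smul])
  have hszero : ∀ t, (∀ k < K, t ∉ Icc (x k - lam * d k) (x k + lam * d k)) →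
      s t = 0 ∧ s' t = 0 := by
    intro t ht
    constructor
    · exact Finset.sum_eq_zero fun l hl => by
        rw [(hφ_zero l (Finset.mem_range.mp hl) t (ht l (Finset.mem_range.mp hl))).1, zero_smul]
    · exact Finset.sum_eq_zero fun l hl => by
        rw [(hφ_zero l (Finset.mem_range.mp hl) t (ht l (Finset.mem_range.mp hl))).2, zero_smul]
  -- φ bounds
  have hφ01 : ∀ k t, 0 ≤ φ k t ∧ φ k t ≤ 1 := by
    intro k t
    refine ⟨sq_nonneg _, ?_⟩
    have h1 : max (p k t) 0 ≤ 1 :=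
      max_le (by simp only [hp]; nlinarith [sq_nonneg ((t - x k) / w k)]) zero_le_one
    exact pow_le_one₀ (le_max_right _ _) h1
  -- ψ bound
  have hψ_bound : ∀ k, k < K → ∀ t, ‖ψ k t • v k‖ ≤ 2 / lam := by
    intro k hk t
    have hdk := (hd k hk).1
    have hwk := hwpos k hk
    have hwne : w k ≠ 0 := ne_of_gt hwk
    have hψeq : ψ k t = -(4 * ((t - x k) / w k) * max (1 - ((t - x k) / w k) ^ 2) 0 / w k) := by
      show 2 * max (1 - ((t - x k) / w k) ^ 2) 0 * (-(2 * (t - x k) / w k ^ 2)) = _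
      field_simp
      ring
    have hnorm : ‖ψ k t • v k‖ = |ψ k t| * d k := by
      rw [norm_smul, Real.norm_eq_abs, hvnorm k hk]
    have h8 : |ψ k t| ≤ 2 / w k := by
      rw [hψeq, abs_neg, abs_div, abs_of_pos hwk]
      gcongr
      have hma : |max (1 - ((t - x k) / w k) ^ 2) 0| = max (1 - ((t - x k) / w k) ^ 2) 0 :=
        abs_of_nonneg (le_max_right _ _)
      have hfour : |(4:ℝ)| = 4 := abs_of_nonneg (by norm_num)
      have h9 : |4 * ((t - x k) / w k) * max (1 - ((t - x k) / w k) ^ 2) 0|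
          = 4 * |(t - x k) / w k| * max (1 - ((t - x k) / w k) ^ 2) 0 := by
        rw [abs_mul, abs_mul, hfour, hma]
      rw [h9]
      exact bump_deriv_key ((t - x k) / w k)
    rw [hnorm]
    have hwk' : w k = lam * d k := rfl
    calc |ψ k t| * d k ≤ (2 / w k) * d k := mul_le_mul_of_nonneg_right h8 hdk.le
      _ = 2 / lam := by
        rw [hwk']
        field_simp
  refine ⟨fun t => f t + s t, ?_, ?_, ?_, ?_, ?_⟩
  · exact hf.add (hcs.contDiffOn)
  · intro t _ ht
    simp only [mem_iUnion, exists_prop, not_exists, not_and] at ht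
    show f t + s t = f t
    rw [(hszero t fun k hk => ht k hk).1, add_zero]
  · intro t _
    show ‖f t + s t - f t‖ < θ
    rw [add_sub_cancel_left]
    by_cases hex : ∃ k, k < K ∧ t ∈ Icc (x k - lam * d k) (x k + lam * d k)
    · obtain ⟨k, hk, htk⟩ := hex
      rw [(hcollapse k hk t htk).1, norm_smul, Real.norm_eq_abs, hvnorm k hk,
        abs_of_nonneg (hφ01 k t).1]
      have := (hd k hk).2.1
      nlinarith [(hφ01 k t).2, (hd k hk).1]
    · push_neg at hex
      rw [(hszero t fun k hk => hex k hk).1]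
      simpa using hθ
  · intro t ht
    have hu : UniqueDiffWithinAt ℝ (Icc (0:ℝ) 1) t := uniqueDiffOn_Icc_zero_one t ht
    have hfd : DifferentiableWithinAt ℝ f (Icc 0 1) t := (hf.differentiableOn one_ne_zero) t ht
    have hsd := (hder_s t).differentiableAt
    rw [derivWithin_fun_add hfd hsd.differentiableWithinAt, hsd.derivWithin hu,
      (hder_s t).deriv, add_sub_cancel_left]
    by_cases hex : ∃ k, k < K ∧ t ∈ Icc (x k - lam * d k) (x k + lam * d k)
    · obtain ⟨k, hk, htk⟩ := hex
      rw [(hcollapse k hk t htk).2]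
      exact hψ_bound k hk t
    · push_neg at hex
      rw [(hszero t fun k hk => hex k hk).2, norm_zero]
      positivity
  · intro k hk
    have hdk := (hd k hk).1
    have hwk := hwpos k hk
    have hrk := hr k hk
    set δ := c * d k / (4 * M) with hδ
    have hδ0 : 0 < δ := by positivity
    have hδlt : δ < lam * d k := by
      rw [hδ, div_lt_iff₀ (by positivity : (0:ℝ) < 4 * M)]
      have h5 : (1:ℝ) < lam * M := one_lt_mul hlam.le hM
      have h6 := mul_lt_mul_of_pos_right hc1 hdk
      have h7 := mul_lt_mul_of_pos_right h5 hdk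
      linarith [h6, h7, hdk]
    refine ⟨x k - δ, x k + δ, ?_, ?_, h k, r k, hrk.1, ?_, ?_⟩
    · intro t htt
      rw [mem_Icc]
      rw [mem_Ioo] at htt
      constructor <;> linarith [htt.1, htt.2, hδlt]
    · have : c / (4 * M * lam) * (2 * lam * d k) = x k + δ - (x k - δ) := by
        rw [hδ]; field_simp; ring
      rw [ge_iff_le, this]
    · intro t htt
      rw [mem_Ioo] at htt
      have htI : t ∈ Icc (x k - lam * d k) (x k + lam * d k) := by
        rw [mem_Icc]; constructor <;> linarith [htt.1, htt.2, hδlt]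
      have hxI : x k ∈ Icc (x k - lam * d k) (x k + lam * d k) := by
        have : 0 < lam * d k := mul_pos hlam0 hdk
        rw [mem_Icc]; constructor <;> linarith
      have ht01 : t ∈ Icc (0:ℝ) 1 := Ioo_subset_Icc_self (hI k hk htI)
      have hx01 : x k ∈ Icc (0:ℝ) 1 := Ioo_subset_Icc_self (hI k hk hxI)
      -- Lipschitz bound
      have hlip : ‖f t - f (x k)‖ ≤ M * ‖t - x k‖ :=
        Convex.norm_image_sub_le_of_norm_derivWithin_le (hf.differentiableOn one_ne_zero) hf'
          (convex_Icc 0 1) hx01 ht01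
      have habs : |t - x k| ≤ δ := by
        rw [abs_le]; constructor <;> linarith [htt.1, htt.2]
      have hA : ‖f t - f (x k)‖ ≤ c * d k / 4 := by
        calc ‖f t - f (x k)‖ ≤ M * ‖t - x k‖ := hlip
          _ = M * |t - x k| := by rw [Real.norm_eq_abs]
          _ ≤ M * δ := mul_le_mul_of_nonneg_left habs hM0.le
          _ = c * d k / 4 := by rw [hδ]; field_simp
      -- closeness of the bump to 1
      have huabs : |(t - x k) / w k| ≤ c / (4 * M * lam) := by
        rw [abs_div, abs_of_pos hwk, div_le_iff₀ hwk]
        calc |t - x k| ≤ δ := habs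
          _ = c / (4 * M * lam) * w k := by
            rw [hδ]
            show _ = _ * (lam * d k)
            field_simp
      have hu2 : ((t - x k) / w k) ^ 2 ≤ (c / (4 * M * lam)) ^ 2 := by
        rw [← sq_abs]
        exact pow_le_pow_left₀ (abs_nonneg _) huabs 2
      have hsq : (c / (4 * M * lam)) ^ 2 ≤ c / 16 := by
        rw [div_pow, div_le_div_iff₀ (by positivity) (by norm_num : (0:ℝ) < 16)]
        have hML : 1 < M * lam := one_lt_mul hM.le hlam
        have h1 : c * c ≤ c := mul_le_of_le_one_left hc0.le hc1.le
        have h2 : (1:ℝ) ≤ (M * lam) ^ 2 := by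
          calc (1:ℝ) = 1 ^ 2 := by norm_num
            _ ≤ (M * lam) ^ 2 := pow_le_pow_left₀ (by norm_num) hML.le 2
        have h3 := mul_nonneg hc0.le (sub_nonneg.mpr h2)
        nlinarith [h1, h3]
      have hφclose : 1 - φ k t ≤ 2 * ((t - x k) / w k) ^ 2 := bump_close_key ((t - x k) / w k)
      have hB : (1 - φ k t) * d k ≤ c * d k / 8 := by
        have h2u : 2 * ((t - x k) / w k) ^ 2 ≤ c / 8 := by linarith only [hu2, hsq]
        have := mul_le_mul_of_nonneg_right (hφclose.trans h2u) hdk.le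
        linarith
      -- put it together
      have hgt : (f t + s t) - h k = (f t - f (x k)) + (φ k t - 1) • v k := by
        rw [(hcollapse k hk t htI).1, sub_smul, one_smul, hv]
        beta_reduce
        abel
      rw [mem_ball, dist_eq_norm, hgt]
      have hnorm2 : ‖(φ k t - 1) • v k‖ = (1 - φ k t) * d k := by
        rw [norm_smul, Real.norm_eq_abs, hvnorm k hk, abs_of_nonpos (sub_nonpos.mpr (hφ01 k t).2)]
        ring_nf
      calc ‖(f t - f (x k)) + (φ k t - 1) • v k‖
          ≤ ‖f t - f (x k)‖ + ‖(φ k t - 1) • v k‖ := norm_add_le _ _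
        _ = ‖f t - f (x k)‖ + (1 - φ k t) * d k := by rw [hnorm2]
        _ < r k := by linarith only [hA, hB, hrk.2.2, mul_pos hc0 hdk]
    · rw [Set.subset_compl_iff_disjoint_right, Set.disjoint_iff_inter_eq_empty]
      exact hrk.2.1
end
end

section
/- For every real number p > 1 there exists a power-p-porous subset C of [0,1] with positive Lebesgue measure. -/
open Set MeasureTheory Metric Topology

noncomputable section

/-- `P` is power-`p`-porous: at every `x ∈ P` and every scale `ε > 0` there is a hole
`B(h,r)` of `P` with `d(h,x) < ε` and `r > d(h,x)^p`. -/
def IsPowerPorous {M : Type*} [MetricSpace M] (p : ℝ) (P : Set M) : Prop :=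
  ∀ x ∈ P, ∀ ε > 0, ∃ h : M, ∃ r > 0,
    dist h x < ε ∧ Metric.ball h r ∩ P = ∅ ∧ r > dist h x ^ p

/-- For every `p > 1` there is a power-`p`-porous subset of the metric
space `[0,1]` of positive Lebesgue (outer) measure. -/
theorem exists_powerPorous_posMeasure {p : ℝ} (hp : 1 < p) :
    ∃ C : Set (Icc (0:ℝ) 1), IsPowerPorous p C ∧ 0 < volume (Subtype.val '' C) := by
  set t : ℝ := (p-1)/2 with ht_def
  set q : ℝ := (p+1)/2 with hq_def
  have ht : 0 < t := by simp [ht_def]; linarith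
  have hq1 : 1 < q := by simp [hq_def]; linarith
  have hqp : q < p := by simp [hq_def]; linarith
  have hqt : q = t + 1 := by simp [hq_def, ht_def]; ring
  set δ : ℕ → ℝ := fun n => min (1/2) (((1/2:ℝ)^(n+4)) ^ (1/t)) with hδ_def
  have hδpos : ∀ n, 0 < δ n := by
    intro n
    refine lt_min (by norm_num) (Real.rpow_pos_of_pos (by positivity) _)
  have hδhalf : ∀ n, δ n ≤ 1/2 := fun n => min_le_left _ _
  have hδ1 : ∀ n, δ n < 1 := fun n => lt_of_le_of_lt (hδhalf n) (by norm_num)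
  have hδt : ∀ n, δ n ^ t ≤ (1/2:ℝ)^(n+4) := by
    intro n
    have h1 : δ n ^ t ≤ (((1/2:ℝ)^(n+4)) ^ (1/t)) ^ t :=
      Real.rpow_le_rpow (le_of_lt (hδpos n)) (min_le_right _ _) ht.le
    calc δ n ^ t ≤ (((1/2:ℝ)^(n+4)) ^ (1/t)) ^ t := h1
      _ = ((1/2:ℝ)^(n+4)) ^ ((1/t) * t) := by
          rw [← Real.rpow_mul (by positivity)]
      _ = (1/2:ℝ)^(n+4) := by
          rw [one_div_mul_cancel ht.ne', Real.rpow_one]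
  have hδsmall : ∀ ε : ℝ, 0 < ε → ∃ n, δ n < ε := by
    intro ε hε
    set c : ℝ := ((1/2:ℝ)) ^ (1/t) with hc
    have hc0 : 0 < c := Real.rpow_pos_of_pos (by norm_num) _
    have hc1 : c < 1 := Real.rpow_lt_one (by norm_num) (by norm_num) (by positivity)
    obtain ⟨n, hn⟩ := exists_pow_lt_of_lt_one hε hc1
    refine ⟨n, lt_of_le_of_lt ?_ hn⟩
    calc δ n ≤ ((1/2:ℝ)^(n+4)) ^ (1/t) := min_le_right _ _
      _ = c ^ (n+4) := by
          rw [hc, ← Real.rpow_natCast ((1/2:ℝ)) (n+4), ← Real.rpow_mul (by norm_num),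
            mul_comm, Real.rpow_mul (by norm_num), Real.rpow_natCast]
      _ ≤ c ^ n := pow_le_pow_of_le_one hc0.le hc1.le (by omega)
  set K : ℕ → ℕ := fun n => ⌊1 / δ n⌋₊ + 1 with hK_def
  set U : Set ℝ := ⋃ n, ⋃ k ∈ Finset.range (K n), Metric.ball ((k:ℝ) * δ n) (δ n ^ q)
    with hU_def
  refine ⟨{x : Icc (0:ℝ) 1 | (x:ℝ) ∉ U}, ?_, ?_⟩
  · -- porosity
    rintro x hx ε hε
    obtain ⟨n, hn⟩ := hδsmall ε hε
    have hx0 : (0:ℝ) ≤ (x:ℝ) := x.2.1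
    have hx1 : (x:ℝ) ≤ 1 := x.2.2
    set k : ℕ := ⌊(x:ℝ) / δ n⌋₊ with hk_def
    have hk1 : (k:ℝ) * δ n ≤ (x:ℝ) := by
      rw [hk_def]
      have := Nat.floor_le (show (0:ℝ) ≤ (x:ℝ) / δ n by positivity)
      calc (⌊(x:ℝ) / δ n⌋₊ : ℝ) * δ n ≤ ((x:ℝ)/δ n) * δ n :=
            mul_le_mul_of_nonneg_right this (hδpos n).le
        _ = (x:ℝ) := div_mul_cancel₀ _ (hδpos n).ne'
    have hk2 : (x:ℝ) - (k:ℝ) * δ n < δ n := by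
      have := Nat.lt_floor_add_one ((x:ℝ) / δ n)
      have h2 : (x:ℝ) < ((k:ℝ) + 1) * δ n := by
        rw [hk_def]
        calc (x:ℝ) = ((x:ℝ)/δ n) * δ n := (div_mul_cancel₀ _ (hδpos n).ne').symm
          _ < ((⌊(x:ℝ)/δ n⌋₊:ℝ) + 1) * δ n :=
              mul_lt_mul_of_pos_right this (hδpos n)
      linarith [h2]
    have hkK : k ∈ Finset.range (K n) := by
      rw [Finset.mem_range]
      have : k ≤ ⌊1 / δ n⌋₊ := by
        rw [hk_def]
        exact Nat.floor_le_floor (by gcongr)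
      simp only [hK_def]
      omega
    have hh0 : (0:ℝ) ≤ (k:ℝ) * δ n := by positivity
    have hh1 : (k:ℝ) * δ n ≤ 1 := le_trans hk1 hx1
    refine ⟨⟨(k:ℝ) * δ n, hh0, hh1⟩, δ n ^ q, Real.rpow_pos_of_pos (hδpos n) _, ?_, ?_, ?_⟩
    · -- dist < ε
      have : dist ((⟨(k:ℝ)*δ n, hh0, hh1⟩ : Icc (0:ℝ) 1)) x = |(k:ℝ)*δ n - (x:ℝ)| := rfl
      rw [this, abs_sub_comm, abs_of_nonneg (by linarith)]
      linarith
    · -- hole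
      ext y
      simp only [mem_inter_iff, mem_ball, mem_setOf_eq, mem_empty_iff_false, iff_false,
        not_and, not_not]
      intro hy
      rw [hU_def]
      refine mem_iUnion.2 ⟨n, ?_⟩
      refine mem_iUnion₂.2 ⟨k, hkK, ?_⟩
      simpa [Metric.mem_ball, Subtype.dist_eq] using hy
    · -- r > dist ^ p
      have hd : dist ((⟨(k:ℝ)*δ n, hh0, hh1⟩ : Icc (0:ℝ) 1)) x = (x:ℝ) - (k:ℝ)*δ n := by
        rw [Subtype.dist_eq]
        simp only [Real.dist_eq]
        rw [abs_sub_comm, abs_of_nonneg (by linarith)]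
      rw [hd]
      have hd0 : (0:ℝ) ≤ (x:ℝ) - (k:ℝ)*δ n := by linarith
      calc ((x:ℝ) - (k:ℝ)*δ n) ^ p ≤ δ n ^ p :=
            Real.rpow_le_rpow hd0 hk2.le (by linarith)
        _ < δ n ^ q := Real.rpow_lt_rpow_of_exponent_gt (hδpos n) (hδ1 n) hqp
  · -- positive measure
    have himg : Subtype.val '' {x : Icc (0:ℝ) 1 | (x:ℝ) ∉ U} = Icc (0:ℝ) 1 \ U := by
      ext y
      constructor
      · rintro ⟨z, hz, rfl⟩
        exact ⟨z.2, hz⟩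
      · rintro ⟨hy1, hy2⟩
        exact ⟨⟨y, hy1⟩, hy2, rfl⟩
    rw [himg]
    -- volume U ≤ 1/2
    have hUvol : volume U ≤ 1/2 := by
      rw [hU_def]
      calc volume (⋃ n, ⋃ k ∈ Finset.range (K n), Metric.ball ((k:ℝ) * δ n) (δ n ^ q))
          ≤ ∑' n, volume (⋃ k ∈ Finset.range (K n), Metric.ball ((k:ℝ) * δ n) (δ n ^ q)) :=
            measure_iUnion_le _
        _ ≤ ∑' n, ENNReal.ofReal ((1/2:ℝ)^(n+2)) := by
            refine ENNReal.tsum_le_tsum fun n => ?_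
            calc volume (⋃ k ∈ Finset.range (K n), Metric.ball ((k:ℝ) * δ n) (δ n ^ q))
                ≤ ∑ k ∈ Finset.range (K n), volume (Metric.ball ((k:ℝ) * δ n) (δ n ^ q)) :=
                  measure_biUnion_finset_le _ _
              _ = (K n : ENNReal) * ENNReal.ofReal (2 * δ n ^ q) := by
                  simp [Real.volume_ball, Finset.sum_const, nsmul_eq_mul]
              _ = ENNReal.ofReal ((K n : ℝ) * (2 * δ n ^ q)) := by
                  rw [← ENNReal.ofReal_natCast (K n), ← ENNReal.ofReal_mul (by positivity)]
              _ ≤ ENNReal.ofReal ((1/2:ℝ)^(n+2)) := by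
                  apply ENNReal.ofReal_le_ofReal
                  have hKn : (K n : ℝ) ≤ 2 / δ n := by
                    rw [hK_def]
                    push_cast
                    have h1 : (⌊1 / δ n⌋₊ : ℝ) ≤ 1 / δ n := Nat.floor_le (by positivity)
                    have h2 : (1:ℝ) ≤ 1 / δ n := by
                      rw [le_div_iff₀ (hδpos n)]; linarith [hδhalf n]
                    calc (⌊1 / δ n⌋₊ : ℝ) + 1 ≤ 1/δ n + 1/δ n := by linarith
                      _ = 2 / δ n := by ring
                  have hstep : (K n : ℝ) * (2 * δ n ^ q) ≤ 4 * δ n ^ t := by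
                    have hq' : δ n ^ q = δ n ^ t * δ n := by
                      rw [hqt, Real.rpow_add (hδpos n), Real.rpow_one]
                    calc (K n : ℝ) * (2 * δ n ^ q) ≤ (2 / δ n) * (2 * δ n ^ q) := by
                          apply mul_le_mul_of_nonneg_right hKn (by positivity)
                      _ = 4 * δ n ^ t := by
                          rw [hq']; have hδne := (hδpos n).ne'; field_simp; ring
                  calc (K n : ℝ) * (2 * δ n ^ q) ≤ 4 * δ n ^ t := hstep
                    _ ≤ 4 * (1/2:ℝ)^(n+4) := by linarith [hδt n]
                    _ = (1/2:ℝ)^(n+2) := by ring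
        _ = ENNReal.ofReal (1/2) := by
            rw [← ENNReal.ofReal_tsum_of_nonneg (fun n => by positivity)]
            · congr 1
              have : ∑' (n:ℕ), ((1/2:ℝ))^(n+2) = (1/4) * ∑' (n:ℕ), ((1/2:ℝ))^n := by
                rw [← tsum_mul_left]
                congr 1; ext n; ring
              have hg : ∑' (n:ℕ), ((1/2:ℝ))^n = 2 := by
                rw [tsum_geometric_of_lt_one (by norm_num) (by norm_num)]
                norm_num
              rw [this, hg]
              norm_num
            · exact ((summable_geometric_of_lt_one (r := (1/2:ℝ)) (by norm_num) (by norm_num)).mul_left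
                ((1/4:ℝ))).congr (fun n => by ring)
        _ = 1/2 := by
            rw [ENNReal.ofReal_div_of_pos (by norm_num)]
            norm_num
    -- conclude
    by_contra h0
    push_neg at h0
    have h0' : volume (Icc (0:ℝ) 1 \ U) = 0 := le_antisymm h0 zero_le
    have hsub : Icc (0:ℝ) 1 ⊆ (Icc (0:ℝ) 1 \ U) ∪ U := fun y hy => by
      by_cases hyU : y ∈ U
      · exact Or.inr hyU
      · exact Or.inl ⟨hy, hyU⟩
    have : volume (Icc (0:ℝ) 1) ≤ volume (Icc (0:ℝ) 1 \ U) + volume U :=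
      le_trans (measure_mono hsub) (measure_union_le _ _)
    rw [h0', zero_add, Real.volume_Icc] at this
    have h1 : (1:ENNReal) ≤ 1/2 := by
      calc (1:ENNReal) = ENNReal.ofReal (1 - 0) := by norm_num
        _ ≤ 1/2 := le_trans this hUvol
    norm_num at h1


end
end

section
/- Let F ⊆ [0,1] be a Lebesgue measurable set of positive Lebesgue measure and set S = F × ℝ ⊆ ℝ². Then there exists a nonempty open subset U of Γ₁(ℝ²) such that for every curve γ ∈ U the set {t ∈ [0,1] : γ(t) ∈ S} has positive Lebesgue measure. -/
open Set MeasureTheory Metric Topology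
open scoped ENNReal

noncomputable section

/-- The space `Γ₁(H)` of `C¹` curves `[0,1] → H`, encoded as pairs
`(γ, γ')` of continuous maps such that `γ'` is the (one-sided at the endpoints)
derivative of `γ` on `[0,1]`. -/
def Gamma1 (H : Type*) [NormedAddCommGroup H] [NormedSpace ℝ H] : Type _ :=
  {p : C(Icc (0:ℝ) 1, H) × C(Icc (0:ℝ) 1, H) //
    ∀ t ∈ Icc (0:ℝ) 1,
      HasDerivWithinAt (IccExtend zero_le_one ⇑p.1) (IccExtend zero_le_one ⇑p.2 t) (Icc 0 1) t}

/-- The metric on `Γ₁(H)` induced by the norm `‖γ‖_∞ + ‖γ'‖_∞`. -/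
noncomputable instance Gamma1.metricSpace (H : Type*) [NormedAddCommGroup H]
    [NormedSpace ℝ H] : MetricSpace (Gamma1 H) where
  dist f g := ‖f.1.1 - g.1.1‖ + ‖f.1.2 - g.1.2‖
  dist_self f := by simp
  dist_comm f g := by
    simp only [norm_sub_rev f.1.1 g.1.1, norm_sub_rev f.1.2 g.1.2]
  dist_triangle f g h := by
    change ‖f.1.1 - h.1.1‖ + ‖f.1.2 - h.1.2‖ ≤
      (‖f.1.1 - g.1.1‖ + ‖f.1.2 - g.1.2‖) + (‖g.1.1 - h.1.1‖ + ‖g.1.2 - h.1.2‖)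
    have h1 := dist_triangle f.1.1 g.1.1 h.1.1
    have h2 := dist_triangle f.1.2 g.1.2 h.1.2
    simp only [dist_eq_norm] at h1 h2
    linarith
  eq_of_dist_eq_zero := by
    intro f g hfg
    change ‖f.1.1 - g.1.1‖ + ‖f.1.2 - g.1.2‖ = 0 at hfg
    have n1 := norm_nonneg (f.1.1 - g.1.1)
    have n2 := norm_nonneg (f.1.2 - g.1.2)
    have e1 : ‖f.1.1 - g.1.1‖ = 0 := by linarith
    have e2 : ‖f.1.2 - g.1.2‖ = 0 := by linarith
    have q1 : f.1.1 = g.1.1 := sub_eq_zero.mp (norm_eq_zero.mp e1)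
    have q2 : f.1.2 = g.1.2 := sub_eq_zero.mp (norm_eq_zero.mp e2)
    exact Subtype.ext (Prod.ext q1 q2)

/-- The outer Lebesgue measure of the set of times `t ∈ [0,1]` at which a curve
`γ ∈ Γ₁(H)` lies in the set `E`. -/
def Gamma1.measOn {H : Type*} [NormedAddCommGroup H] [NormedSpace ℝ H]
    (γ : Gamma1 H) (E : Set H) : ℝ≥0∞ :=
  volume (Subtype.val '' (⇑γ.1.1 ⁻¹' E))


lemma abs_coord_le_norm (v : EuclideanSpace ℝ (Fin 2)) (i : Fin 2) : |v i| ≤ ‖v‖ := by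
  rw [EuclideanSpace.norm_eq]
  have h1 : |v i| = Real.sqrt (‖v i‖ ^ 2) := by
    rw [Real.sqrt_sq_eq_abs, Real.norm_eq_abs, abs_abs]
  rw [h1]
  apply Real.sqrt_le_sqrt
  exact Finset.single_le_sum (fun j _ => sq_nonneg ‖v j‖) (Finset.mem_univ i)

/-- base curve t ↦ t • e₀ -/
def baseCurve : Gamma1 (EuclideanSpace ℝ (Fin 2)) := by
  refine ⟨(⟨fun t => (t : ℝ) • EuclideanSpace.single (0 : Fin 2) (1:ℝ),
      (continuous_subtype_val.smul continuous_const)⟩,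
    ContinuousMap.const _ (EuclideanSpace.single (0 : Fin 2) (1:ℝ))), ?_⟩
  intro t ht
  have heq : ∀ s ∈ Icc (0:ℝ) 1,
      IccExtend zero_le_one
        (fun u : Icc (0:ℝ) 1 => (u : ℝ) • EuclideanSpace.single (0 : Fin 2) (1:ℝ)) s
        = s • EuclideanSpace.single (0 : Fin 2) (1:ℝ) := by
    intro s hs
    exact IccExtend_of_mem _ _ hs
  have hbase : HasDerivWithinAt (fun s : ℝ => s • EuclideanSpace.single (0 : Fin 2) (1:ℝ))
      (EuclideanSpace.single (0 : Fin 2) (1:ℝ)) (Icc 0 1) t := by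
    simpa using ((hasDerivAt_id t).smul_const
      (EuclideanSpace.single (0 : Fin 2) (1:ℝ))).hasDerivWithinAt
  have := hbase.congr heq (heq t ht)
  simpa [IccExtend_of_mem _ _ ht, ContinuousMap.const_apply, Function.const_apply] using this

/-- If `F ⊆ [0,1]` is measurable with positive Lebesgue measure and
`S = F × ℝ ⊆ ℝ²`, then there is a nonempty open set `U ⊆ Γ₁(ℝ²)` such that every curve
`γ ∈ U` spends a set of times of positive Lebesgue measure in `S`. -/
theorem exists_open_posMeasure_of_prod {F : Set ℝ} (hFmeas : MeasurableSet F)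
    (hFsub : F ⊆ Icc (0:ℝ) 1) (hFpos : 0 < volume F) :
    ∃ U : Set (Gamma1 (EuclideanSpace ℝ (Fin 2))), IsOpen U ∧ U.Nonempty ∧
      ∀ γ ∈ U, 0 < Gamma1.measOn γ {v : EuclideanSpace ℝ (Fin 2) | v 0 ∈ F} := by
  classical
  set m : ℝ := (volume F).toReal with hm_def
  have hFfin : volume F ≤ 1 := by
    calc volume F ≤ volume (Icc (0:ℝ) 1) := measure_mono hFsub
    _ = 1 := by simp
  have hFne : volume F ≠ ⊤ := ne_top_of_le_ne_top (by norm_num) hFfin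
  have hm_pos : 0 < m := ENNReal.toReal_pos hFpos.ne' hFne
  have hm_le : m ≤ 1 := by
    rw [hm_def]
    calc (volume F).toReal ≤ (1 : ℝ≥0∞).toReal := ENNReal.toReal_mono (by norm_num) hFfin
    _ = 1 := by simp
  set ε : ℝ := m / 4 with hε_def
  have hε_pos : 0 < ε := by positivity
  have hε_le : ε ≤ 1 / 4 := by simp only [hε_def]; linarith
  -- the good part of F
  set G : Set ℝ := F ∩ Icc ε (1 - ε) with hG_def
  have hGpos : 0 < volume G := by
    by_contra h
    push_neg at h
    have hG0 : volume G = 0 := le_antisymm h (by simp)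
    have hsub : F ⊆ G ∪ (Ico 0 ε ∪ Ioc (1 - ε) 1) := by
      intro x hx
      rcases hFsub hx with ⟨hx0, hx1⟩
      by_cases h1 : ε ≤ x
      · by_cases h2 : x ≤ 1 - ε
        · exact Or.inl ⟨hx, h1, h2⟩
        · exact Or.inr (Or.inr ⟨lt_of_not_ge h2, hx1⟩)
      · exact Or.inr (Or.inl ⟨hx0, lt_of_not_ge h1⟩)
    have hvol : volume F ≤ volume G + (volume (Ico (0:ℝ) ε) + volume (Ioc (1 - ε) (1:ℝ))) :=
      le_trans (measure_mono hsub) (le_trans (measure_union_le _ _)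
        (add_le_add le_rfl (measure_union_le _ _)))
    rw [hG0, zero_add, Real.volume_Ico, Real.volume_Ioc] at hvol
    have h1 : ENNReal.ofReal (ε - 0) + ENNReal.ofReal (1 - (1 - ε)) = ENNReal.ofReal (2 * ε) := by
      rw [← ENNReal.ofReal_add (by linarith) (by linarith)]
      ring_nf
    rw [h1] at hvol
    have h2 : volume F = ENNReal.ofReal m := by
      rw [hm_def, ENNReal.ofReal_toReal hFne]
    rw [h2] at hvol
    have h3 : (ENNReal.ofReal m : ℝ≥0∞) ≤ ENNReal.ofReal (2 * ε) := hvol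
    have h4 : m ≤ 2 * ε := by
      have := (ENNReal.ofReal_le_ofReal_iff (by linarith)).mp h3
      linarith
    simp only [hε_def] at h4
    linarith
  -- the open set
  refine ⟨Metric.ball baseCurve ε, isOpen_ball, ⟨baseCurve, mem_ball_self hε_pos⟩, ?_⟩
  intro γ hγ
  have hd : ‖γ.1.1 - baseCurve.1.1‖ + ‖γ.1.2 - baseCurve.1.2‖ < ε := mem_ball.mp hγ
  have hd1 : ‖γ.1.1 - baseCurve.1.1‖ < ε := by
    have := norm_nonneg (γ.1.2 - baseCurve.1.2); linarith
  have hd2 : ‖γ.1.2 - baseCurve.1.2‖ < ε := by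
    have := norm_nonneg (γ.1.1 - baseCurve.1.1); linarith
  -- the first coordinate function
  set f : ℝ → ℝ := fun t => IccExtend zero_le_one (⇑γ.1.1) t 0 with hf_def
  set f' : ℝ → ℝ := fun t => IccExtend zero_le_one (⇑γ.1.2) t 0 with hf'_def
  have hderiv : ∀ t ∈ Icc (0:ℝ) 1, HasDerivWithinAt f (f' t) (Icc 0 1) t := by
    intro t ht
    have := (PiLp.proj 2 (fun _ : Fin 2 => ℝ)
      (0 : Fin 2)).hasFDerivAt.comp_hasDerivWithinAt t (γ.2 t ht)
    exact this
  -- pointwise bounds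
  have hfb : ∀ t (ht : t ∈ Icc (0:ℝ) 1), |f t - t| < ε := by
    intro t ht
    have h1 : f t = γ.1.1 ⟨t, ht⟩ 0 := by rw [hf_def]; simp [IccExtend_of_mem _ _ ht]
    have h2 : (baseCurve.1.1 ⟨t, ht⟩ : EuclideanSpace ℝ (Fin 2)) 0 = t := by
      simp [baseCurve, EuclideanSpace.single_apply]
    have h3 : ((γ.1.1 - baseCurve.1.1) ⟨t, ht⟩ : EuclideanSpace ℝ (Fin 2)) 0 = f t - t := by
      rw [h1]; simp only [ContinuousMap.sub_apply, PiLp.sub_apply]; rw [h2]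
    rw [show |f t - t| = |((γ.1.1 - baseCurve.1.1) ⟨t, ht⟩ : EuclideanSpace ℝ (Fin 2)) 0| from by rw [h3]]
    calc |((γ.1.1 - baseCurve.1.1) ⟨t, ht⟩ : EuclideanSpace ℝ (Fin 2)) 0|
        ≤ ‖((γ.1.1 - baseCurve.1.1) ⟨t, ht⟩ : EuclideanSpace ℝ (Fin 2))‖ :=
          abs_coord_le_norm _ 0
      _ ≤ ‖γ.1.1 - baseCurve.1.1‖ := ContinuousMap.norm_coe_le_norm _ _
      _ < ε := hd1
  have hf'b : ∀ t (ht : t ∈ Icc (0:ℝ) 1), |f' t - 1| < ε := by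
    intro t ht
    have h1 : f' t = γ.1.2 ⟨t, ht⟩ 0 := by rw [hf'_def]; simp [IccExtend_of_mem _ _ ht]
    have h2 : (baseCurve.1.2 ⟨t, ht⟩ : EuclideanSpace ℝ (Fin 2)) 0 = 1 := by
      simp [baseCurve, EuclideanSpace.single_apply]
    have h3 : ((γ.1.2 - baseCurve.1.2) ⟨t, ht⟩ : EuclideanSpace ℝ (Fin 2)) 0 = f' t - 1 := by
      rw [h1]; simp only [ContinuousMap.sub_apply, PiLp.sub_apply]; rw [h2]
    rw [show |f' t - 1| = |((γ.1.2 - baseCurve.1.2) ⟨t, ht⟩ : EuclideanSpace ℝ (Fin 2)) 0| from by rw [h3]]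
    calc |((γ.1.2 - baseCurve.1.2) ⟨t, ht⟩ : EuclideanSpace ℝ (Fin 2)) 0|
        ≤ ‖((γ.1.2 - baseCurve.1.2) ⟨t, ht⟩ : EuclideanSpace ℝ (Fin 2))‖ :=
          abs_coord_le_norm _ 0
      _ ≤ ‖γ.1.2 - baseCurve.1.2‖ := ContinuousMap.norm_coe_le_norm _ _
      _ < ε := hd2
  -- Lipschitz bound
  have hlip : LipschitzOnWith 2 f (Icc 0 1) := by
    apply (convex_Icc (0:ℝ) 1).lipschitzOnWith_of_nnnorm_hasDerivWithin_le hderiv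
    intro t ht
    have hh := abs_lt.mp (hf'b t ht)
    have habs : |f' t| ≤ 2 := by
      rw [abs_le]; constructor <;> linarith
    rw [← NNReal.coe_le_coe]
    simpa [Real.norm_eq_abs] using habs
  have hcont : ContinuousOn f (Icc 0 1) := hlip.continuousOn
  -- surjectivity onto G
  have hsurj : G ⊆ f '' Icc 0 1 := by
    intro v hv
    rcases hv with ⟨hvF, hv1, hv2⟩
    have h0 : f 0 < ε := by
      have := hfb 0 (by constructor <;> norm_num)
      rw [sub_zero] at this
      exact lt_of_abs_lt this |>.trans_le le_rfl
    have h1 : 1 - ε < f 1 := by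
      have := hfb 1 (by constructor <;> norm_num)
      have := abs_lt.mp this
      linarith [this.1]
    have : v ∈ Icc (f 0) (f 1) := ⟨le_trans h0.le hv1, le_trans hv2 h1.le⟩
    exact intermediate_value_Icc zero_le_one hcont this
  -- the time set
  set T : Set ℝ := f ⁻¹' F ∩ Icc 0 1 with hT_def
  have hTset : Subtype.val '' (⇑γ.1.1 ⁻¹' {v : EuclideanSpace ℝ (Fin 2) | v 0 ∈ F}) = T := by
    ext t
    constructor
    · rintro ⟨s, hs, rfl⟩
      refine ⟨?_, s.2⟩
      simp only [mem_preimage, hf_def]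
      rw [IccExtend_of_mem _ _ s.2]
      simpa using hs
    · rintro ⟨htF, htIcc⟩
      refine ⟨⟨t, htIcc⟩, ?_, rfl⟩
      simp only [mem_preimage, mem_setOf_eq]
      have : f t ∈ F := htF
      rw [hf_def] at this
      simp only at this
      rwa [IccExtend_of_mem _ _ htIcc] at this
  have hGT : G ⊆ f '' T := by
    intro v hv
    rcases hsurj hv with ⟨t, ht, rfl⟩
    exact ⟨t, ⟨hv.1, ht⟩, rfl⟩
  -- measure estimate via Hausdorff measure
  have hmeas : volume G ≤ 2 * volume T := by
    have hlipT : LipschitzOnWith 2 f T := hlip.mono (inter_subset_right)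
    have h1 := hlipT.hausdorffMeasure_image_le (zero_le_one (α := ℝ))
    rw [MeasureTheory.hausdorffMeasure_real] at h1
    calc volume G ≤ volume (f '' T) := measure_mono hGT
      _ ≤ ((2 : NNReal) : ℝ≥0∞) ^ (1:ℝ) * volume T := h1
      _ = 2 * volume T := by rw [ENNReal.rpow_one]; norm_cast
  have hTpos : 0 < volume T := by
    by_contra h
    push_neg at h
    have : volume T = 0 := le_antisymm h (by simp)
    rw [this, mul_zero] at hmeas
    exact absurd (le_antisymm hmeas (by simp)) hGpos.ne'
  rw [Gamma1.measOn, hTset]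
  exact hTpos


end
end

section
/- There exist a subset T of ℝ² of Lebesgue measure zero and a residual (comeager) subset Y of Γ₁(ℝ²) such that γ([0,1]) ⊆ T for every curve γ ∈ Y. -/
open Set MeasureTheory Metric Topology
open scoped ENNReal

noncomputable section

section Aux

local notation "E2" => EuclideanSpace ℝ (Fin 2)

lemma aux_gamma1_dist_eq {H : Type*} [NormedAddCommGroup H] [NormedSpace ℝ H]
    (f g : Gamma1 H) :
    dist f g = ‖f.1.1 - g.1.1‖ + ‖f.1.2 - g.1.2‖ := rfl

lemma aux_volume_eq_zero_of_hausdorff {s : Set E2} (hs : MeasurableSet s)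
    (h : μH[2] s = 0) : volume s = 0 := by
  set e := (MeasurableEquiv.toLp 2 (Fin 2 → ℝ)).symm
  have hmp := EuclideanSpace.volume_preserving_symm_measurableEquiv_toLp (Fin 2)
  have h1 : volume s = volume (e '' s) := by
    rw [← hmp.map_eq, MeasurableEquiv.map_apply]
    congr 1
    exact (e.preimage_image s).symm
  have h2 : (volume : Measure (Fin 2 → ℝ)) = μH[2] := by
    have := (hausdorffMeasure_pi_real (ι := Fin 2)).symm
    simpa using this
  have hlip : LipschitzWith 1 (⇑e) := by
    rw [MeasurableEquiv.coe_toLp_symm]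
    exact PiLp.lipschitzWith_ofLp 2 _
  have h3 : μH[2] (e '' s) ≤ (1 : ℝ≥0∞) ^ (2:ℝ) * μH[2] s := by
    simpa using hlip.hausdorffMeasure_image_le (by norm_num) s
  rw [h1, h2]
  simpa [h] using h3

lemma aux_range_eq_image {H : Type*} [NormedAddCommGroup H] [NormedSpace ℝ H]
    (f : C(Icc (0:ℝ) 1, H)) :
    range ⇑f = IccExtend zero_le_one ⇑f '' Icc (0:ℝ) 1 := by
  ext x
  constructor
  · rintro ⟨t, rfl⟩
    exact ⟨(t : ℝ), t.2, by rw [IccExtend_of_mem _ _ t.2]⟩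
  · rintro ⟨t, ht, rfl⟩
    exact ⟨⟨t, ht⟩, by rw [IccExtend_of_mem _ _ ht]⟩

lemma aux_lipschitzOnWith (γ : Gamma1 E2) :
    LipschitzOnWith ‖γ.1.2‖₊ (IccExtend zero_le_one ⇑γ.1.1) (Icc (0:ℝ) 1) := by
  apply (convex_Icc (0:ℝ) 1).lipschitzOnWith_of_nnnorm_hasDerivWithin_le γ.2
  intro x hx
  rw [IccExtend_of_mem _ _ hx]
  rw [← NNReal.coe_le_coe]
  simpa using ContinuousMap.norm_coe_le_norm γ.1.2 ⟨x, hx⟩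

lemma aux_volume_range (γ : Gamma1 E2) : volume (range ⇑γ.1.1) = 0 := by
  have hmeas : MeasurableSet (range ⇑γ.1.1) :=
    (isCompact_range (map_continuous γ.1.1)).isClosed.measurableSet
  apply aux_volume_eq_zero_of_hausdorff hmeas
  have hIcc : μH[(2:ℝ)] (Icc (0:ℝ) 1) = 0 := by
    have hd : dimH (Icc (0:ℝ) 1) < (2 : NNReal) := by
      calc dimH (Icc (0:ℝ) 1) ≤ dimH (univ : Set ℝ) := dimH_mono (subset_univ _)
        _ = 1 := Real.dimH_univ
        _ < 2 := by norm_num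
    simpa using hausdorffMeasure_of_dimH_lt hd
  have h02 : (0:ℝ) ≤ 2 := by norm_num
  have hb := (aux_lipschitzOnWith γ).hausdorffMeasure_image_le h02
  rw [← aux_range_eq_image] at hb
  refine le_antisymm ?_ zero_le
  calc μH[(2:ℝ)] (range ⇑γ.1.1)
      ≤ (‖γ.1.2‖₊ : ℝ≥0∞) ^ (2:ℝ) * μH[(2:ℝ)] (Icc (0:ℝ) 1) := hb
    _ = 0 := by rw [hIcc, mul_zero]

lemma aux_small_thickening (γ : Gamma1 E2) {δ : ℝ≥0∞} (hδ : 0 < δ) :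
    ∃ ε > (0:ℝ), volume (thickening ε (range ⇑γ.1.1)) < δ := by
  have hc : IsCompact (range ⇑γ.1.1) := isCompact_range (map_continuous γ.1.1)
  have hfin : ∃ R > (0:ℝ), volume (thickening R (range ⇑γ.1.1)) ≠ ∞ :=
    ⟨1, one_pos, (hc.isBounded.thickening.measure_lt_top).ne⟩
  have htend := tendsto_measure_thickening_of_isClosed (μ := volume) hfin hc.isClosed
  rw [aux_volume_range γ] at htend
  have hev : ∀ᶠ r in 𝓝[>] (0:ℝ), volume (thickening r (range ⇑γ.1.1)) < δ :=
    htend.eventually_lt_const hδ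
  obtain ⟨ε, hε1, hε2⟩ := (hev.and self_mem_nhdsWithin).exists
  exact ⟨ε, hε2, hε1⟩

set_option synthInstance.maxHeartbeats 1000000 in
instance : Nonempty (Gamma1 E2) := by
  refine ⟨⟨(0, 0), fun t ht => ?_⟩⟩
  have hz : IccExtend (zero_le_one (α := ℝ)) ⇑((0:C(Icc (0:ℝ) 1, E2))) = fun _ => 0 := by
    ext x; simp [IccExtend]
  simp only [hz]
  simpa [IccExtend] using (hasDerivWithinAt_const t (Icc (0:ℝ) 1) (0 : E2))

lemma aux_val_lipschitz : LipschitzWith 1 (fun γ : Gamma1 E2 =>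
    (γ.1 : C(Icc (0:ℝ) 1, E2) × C(Icc (0:ℝ) 1, E2))) := by
  apply LipschitzWith.of_dist_le_mul
  intro f g
  rw [Prod.dist_eq, aux_gamma1_dist_eq, dist_eq_norm, dist_eq_norm]
  have h1 := norm_nonneg (f.1.1 - g.1.1)
  have h2 := norm_nonneg (f.1.2 - g.1.2)
  push_cast
  rw [one_mul, max_le_iff]
  constructor <;> linarith

lemma aux_val_antilipschitz : AntilipschitzWith 2 (fun γ : Gamma1 E2 =>
    (γ.1 : C(Icc (0:ℝ) 1, E2) × C(Icc (0:ℝ) 1, E2))) := by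
  apply AntilipschitzWith.of_le_mul_dist
  intro f g
  rw [Prod.dist_eq, aux_gamma1_dist_eq, dist_eq_norm, dist_eq_norm]
  push_cast
  rcases le_total ‖f.1.1 - g.1.1‖ ‖f.1.2 - g.1.2‖ with h | h
  · rw [max_eq_right h]; linarith [norm_nonneg (f.1.1 - g.1.1)]
  · rw [max_eq_left h]; linarith [norm_nonneg (f.1.2 - g.1.2)]

set_option synthInstance.maxHeartbeats 1000000 in
instance : SecondCountableTopology (Gamma1 E2) := by
  haveI h : SecondCountableTopology (C(Icc (0:ℝ) 1, E2) × C(Icc (0:ℝ) 1, E2)) :=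
    inferInstance
  exact @Topology.IsEmbedding.secondCountableTopology _ _ _ _ _ h
    (aux_val_antilipschitz.isUniformEmbedding
      aux_val_lipschitz.uniformContinuous).isEmbedding

end Aux


/-- There are a Lebesgue-null set `T ⊆ ℝ²` and a residual (comeager)
set `Y ⊆ Γ₁(ℝ²)` such that `γ([0,1]) ⊆ T` for every `γ ∈ Y`. -/
theorem exists_null_set_containing_residual_curves :
    ∃ T : Set (EuclideanSpace ℝ (Fin 2)), volume T = 0 ∧
      ∃ Y : Set (Gamma1 (EuclideanSpace ℝ (Fin 2))),
        Y ∈ residual (Gamma1 (EuclideanSpace ℝ (Fin 2))) ∧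
        ∀ γ ∈ Y, ∀ t : Icc (0:ℝ) 1, γ.1.1 t ∈ T := by
  obtain ⟨d, hd⟩ := TopologicalSpace.exists_dense_seq (Gamma1 (EuclideanSpace ℝ (Fin 2)))
  have hch : ∀ n k : ℕ, ∃ ε > (0:ℝ),
      volume (thickening ε (range ⇑(d k).1.1)) < (2:ℝ≥0∞)⁻¹ ^ (n + k + 1) := by
    intro n k
    exact aux_small_thickening (d k)
      (ENNReal.pow_pos (ENNReal.inv_pos.2 ENNReal.ofNat_ne_top) _)
  choose ε hεpos hεvol using hch
  refine ⟨⋂ n : ℕ, ⋃ k : ℕ, thickening (ε n k) (range ⇑(d k).1.1), ?_,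
    ⋂ n : ℕ, ⋃ k : ℕ, ball (d k) (ε n k), ?_, ?_⟩
  · -- null
    have hTn : ∀ n, volume (⋃ k, thickening (ε n k) (range ⇑(d k).1.1)) ≤ (2:ℝ≥0∞)⁻¹ ^ n := by
      intro n
      have hsum : ∑' k : ℕ, (2:ℝ≥0∞)⁻¹ ^ (n + k + 1) = (2:ℝ≥0∞)⁻¹ ^ (n + 1) * 2 := by
        have : ∀ k : ℕ, (2:ℝ≥0∞)⁻¹ ^ (n + k + 1) = (2:ℝ≥0∞)⁻¹ ^ (n + 1) * (2:ℝ≥0∞)⁻¹ ^ k := by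
          intro k; rw [← pow_add]; ring_nf
        simp only [this]
        rw [ENNReal.tsum_mul_left, ENNReal.tsum_geometric]
        congr 1
        rw [ENNReal.one_sub_inv_two]; simp
      calc volume (⋃ k, thickening (ε n k) (range ⇑(d k).1.1))
          ≤ ∑' k : ℕ, volume (thickening (ε n k) (range ⇑(d k).1.1)) := measure_iUnion_le _
        _ ≤ ∑' k : ℕ, (2:ℝ≥0∞)⁻¹ ^ (n + k + 1) := ENNReal.tsum_le_tsum fun k => (hεvol n k).le
        _ = (2:ℝ≥0∞)⁻¹ ^ (n + 1) * 2 := hsum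
        _ = (2:ℝ≥0∞)⁻¹ ^ n * ((2:ℝ≥0∞)⁻¹ * 2) := by rw [pow_succ, mul_assoc]
        _ = (2:ℝ≥0∞)⁻¹ ^ n := by
            rw [ENNReal.inv_mul_cancel (by norm_num) ENNReal.ofNat_ne_top, mul_one]
    refine le_antisymm ?_ zero_le
    have hle : ∀ n, volume (⋂ n : ℕ, ⋃ k : ℕ, thickening (ε n k) (range ⇑(d k).1.1))
        ≤ (2:ℝ≥0∞)⁻¹ ^ n :=
      fun n => (measure_mono (iInter_subset _ n)).trans (hTn n)
    have htend : Filter.Tendsto (fun n : ℕ => ((2:ℝ≥0∞)⁻¹) ^ n) Filter.atTop (𝓝 0) :=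
      ENNReal.tendsto_pow_atTop_nhds_zero_of_lt_one
        (by simp [ENNReal.inv_lt_one])
    exact ge_of_tendsto' htend hle
  · -- residual
    rw [countable_iInter_mem]
    intro n
    refine residual_of_dense_open (isOpen_iUnion fun k => isOpen_ball) ?_
    refine hd.mono ?_
    rintro x ⟨k, rfl⟩
    exact mem_iUnion.2 ⟨k, mem_ball_self (hεpos n k)⟩
  · -- inclusion
    intro γ hγ t
    refine mem_iInter.2 fun n => ?_
    obtain ⟨k, hk⟩ := mem_iUnion.1 (mem_iInter.1 hγ n)
    refine mem_iUnion.2 ⟨k, ?_⟩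
    rw [mem_thickening_iff]
    refine ⟨(d k).1.1 t, mem_range_self t, ?_⟩
    have h1 : dist (γ.1.1 t) ((d k).1.1 t) ≤ ‖γ.1.1 - (d k).1.1‖ := by
      rw [dist_eq_norm]
      have := ContinuousMap.norm_coe_le_norm (γ.1.1 - (d k).1.1) t
      simpa using this
    have h2 : ‖γ.1.1 - (d k).1.1‖ ≤ dist γ (d k) := by
      rw [aux_gamma1_dist_eq]
      exact le_add_of_nonneg_right (norm_nonneg _)
    have h3 : dist γ (d k) < ε n k := mem_ball.1 hk
    linarith

end
end

section
/- Every σ-porous subset of ℝⁿ (with the Euclidean metric) has Lebesgue outer measure zero. -/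
open scoped ENNReal
open Set MeasureTheory Metric Topology Filter ENNReal

noncomputable section

/-- `E` is `c`-porous: at every point `x ∈ E` and every scale `ε > 0` there is a hole
`B(h,r)` of `E` with `d(x,h) < ε` and `r > c · d(x,h)`. -/
def IsCPorous {M : Type*} [MetricSpace M] (c : ℝ) (E : Set M) : Prop :=
  ∀ x ∈ E, ∀ ε > 0, ∃ h : M, ∃ r > 0,
    dist x h < ε ∧ Metric.ball h r ∩ E = ∅ ∧ r > c * dist x h

/-- A set is σ-porous if it is a countable union of porous sets. -/
def IsSigmaPorous {M : Type*} [MetricSpace M] (P : Set M) : Prop :=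
  ∃ E : ℕ → Set M, P = ⋃ n, E n ∧ ∀ n, ∃ c : ℝ, 0 < c ∧ c < 1 ∧ IsCPorous c (E n)

lemma cPorous_volume_zero {n : ℕ} {c : ℝ} (hc0 : 0 < c) (hc1 : c < 1)
    {E : Set (EuclideanSpace ℝ (Fin n))} (hE : IsCPorous c E) : volume E = 0 := by
  by_contra h0
  set μ : Measure (EuclideanSpace ℝ (Fin n)) := volume with hμ
  have hae := Besicovitch.ae_tendsto_measure_inter_div μ E
  rw [Filter.eventually_iff, mem_ae_iff] at hae
  -- find x ∈ E with density 1
  have hEx : ∃ x ∈ E, Tendsto (fun r => μ (E ∩ closedBall x r) / μ (closedBall x r))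
      (𝓝[>] 0) (𝓝 1) := by
    by_contra hcon
    push_neg at hcon
    have hsub : E ⊆ {x | Tendsto (fun r => μ (E ∩ closedBall x r) / μ (closedBall x r))
        (𝓝[>] 0) (𝓝 1)}ᶜ := fun x hx hx' => hcon x hx hx'
    have : μ E = 0 := by
      have := (μ.restrict_apply_self E).symm.trans_le
        ((measure_mono hsub).trans_eq hae)
      simpa using this
    exact h0 this
  obtain ⟨x, hxE, hx⟩ := hEx
  -- the density defect
  set k : ENNReal := ENNReal.ofReal ((c / 4) ^ n) with hk
  have hk0 : 0 < k := ENNReal.ofReal_pos.2 (pow_pos (by linarith) n)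
  have hk1 : k ≤ 1 := by
    rw [hk, ← ENNReal.ofReal_one]
    exact ENNReal.ofReal_le_ofReal (pow_le_one₀ (by linarith) (by linarith))
  have hB : (1 : ENNReal) - k < 1 :=
    ENNReal.sub_lt_self one_ne_top one_ne_zero hk0.ne'
  have hev : ∀ᶠ R in 𝓝[>] (0:ℝ),
      1 - k < μ (E ∩ closedBall x R) / μ (closedBall x R) :=
    hx.eventually (eventually_gt_nhds hB)
  obtain ⟨δ, hδ0, hδ⟩ := mem_nhdsGT_iff_exists_Ioo_subset.1 hev
  rw [mem_Ioi] at hδ0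
  -- apply porosity at scale δ/4
  obtain ⟨h, r, hr0, hxh, hhole, hrc⟩ := hE x hxE (δ / 4) (by linarith)
  set d := dist x h with hd
  have hd0 : 0 < d := by
    rcases lt_or_ge 0 d with h' | h'
    · exact h'
    · exfalso
      have : x ∈ ball h r ∩ E := by
        constructor
        · simp only [mem_ball, dist_comm]
          have : d = 0 := le_antisymm h' dist_nonneg
          rw [← hd] at *
          simpa [this] using hr0
        · exact hxE
      rw [hhole] at this
      exact this
  -- the hole closedBall h (c*d/2)
  have hcd2r : c * d / 2 < r := by nlinarith
  have hholesub : closedBall h (c * d / 2) ⊆ closedBall x (2 * d) := by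
    intro y hy
    simp only [mem_closedBall] at hy ⊢
    have := dist_triangle y h x
    have hxh' : dist h x = d := by rw [dist_comm]
    nlinarith [dist_nonneg (x := y) (y := h)]
  have hholeE : E ∩ closedBall x (2 * d) ⊆ closedBall x (2 * d) \ closedBall h (c * d / 2) := by
    intro y ⟨hyE, hyB⟩
    refine ⟨hyB, fun hy => ?_⟩
    have : y ∈ ball h r ∩ E := ⟨lt_of_le_of_lt (mem_closedBall.1 hy) hcd2r, hyE⟩
    rw [hhole] at this
    exact this
  -- measure computations
  have hμcb_pos : 0 < μ (closedBall x (2 * d)) :=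
    measure_closedBall_pos μ x (by linarith)
  have hμcb_lt : μ (closedBall x (2 * d)) < ⊤ := measure_closedBall_lt_top
  have hμhole_lt : μ (closedBall h (c * d / 2)) < ⊤ := measure_closedBall_lt_top
  have hkeq : k * μ (closedBall x (2 * d)) = μ (closedBall h (c * d / 2)) := by
    rw [Measure.addHaar_closedBall _ _ (by linarith : (0:ℝ) ≤ 2 * d),
        Measure.addHaar_closedBall _ _ (by positivity : (0:ℝ) ≤ c * d / 2)]
    rw [hk, finrank_euclideanSpace_fin, ← mul_assoc, ← ENNReal.ofReal_mul (by positivity),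
        ← mul_pow]
    ring_nf
  have hdiff : μ (E ∩ closedBall x (2 * d)) ≤ (1 - k) * μ (closedBall x (2 * d)) := by
    calc μ (E ∩ closedBall x (2 * d))
        ≤ μ (closedBall x (2 * d) \ closedBall h (c * d / 2)) := measure_mono hholeE
      _ = μ (closedBall x (2 * d)) - μ (closedBall h (c * d / 2)) :=
          measure_diff hholesub measurableSet_closedBall.nullMeasurableSet hμhole_lt.ne
      _ = μ (closedBall x (2 * d)) - k * μ (closedBall x (2 * d)) := by rw [hkeq]
      _ = (1 - k) * μ (closedBall x (2 * d)) := by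
          rw [ENNReal.sub_mul (fun _ _ => hμcb_lt.ne), one_mul]
  have hratio : μ (E ∩ closedBall x (2 * d)) / μ (closedBall x (2 * d)) ≤ 1 - k := by
    calc μ (E ∩ closedBall x (2 * d)) / μ (closedBall x (2 * d))
        ≤ (1 - k) * μ (closedBall x (2 * d)) / μ (closedBall x (2 * d)) := by
          exact ENNReal.div_le_div_right hdiff _
      _ = (1 - k) * (μ (closedBall x (2 * d)) / μ (closedBall x (2 * d))) := by
          rw [mul_div_assoc]
      _ ≤ (1 - k) * 1 := mul_le_mul_right ENNReal.div_self_le_one _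
      _ = 1 - k := mul_one _
  have h2d : (2 * d) ∈ Ioo (0:ℝ) δ := ⟨by linarith, by linarith⟩
  exact absurd (hδ h2d) (not_lt.2 hratio)


/-- Every σ-porous subset of `ℝⁿ` (with the Euclidean metric) has
Lebesgue outer measure zero. -/
theorem sigmaPorous_volume_zero {n : ℕ} {P : Set (EuclideanSpace ℝ (Fin n))}
    (hP : IsSigmaPorous P) : volume P = 0 := by
  obtain ⟨E, rfl, hE⟩ := hP
  refine measure_iUnion_null fun n => ?_
  obtain ⟨c, hc0, hc1, hc⟩ := hE n
  exact cPorous_volume_zero hc0 hc1 hc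

end
end

section
/- Let H be a real Hilbert space and let E ⊆ H be a set with the following property: for every open ball U in Γ₁(H) there exists an open ball V in Γ₁(H) with V ⊆ U such that sup_{f∈V} |f⁻¹(E)| ≤ (1/2) · sup_{f∈U} |f⁻¹(E)|. Then the set {γ ∈ Γ₁(H) : |γ⁻¹(E)| = 0} is residual (comeager) in Γ₁(H), where |γ⁻¹(E)| denotes the outer Lebesgue measure of {t ∈ [0,1] : γ(t) ∈ E}. -/
open Set MeasureTheory Metric Topology
open scoped ENNReal

noncomputable section

/-- If `E ⊆ H` is such that every open ball `U` of `Γ₁(H)` contains an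
open ball `V ⊆ U` with `sup_{f ∈ V} |f⁻¹(E)| ≤ (1/2) · sup_{f ∈ U} |f⁻¹(E)|`, then the set
of curves `γ ∈ Γ₁(H)` with `|γ⁻¹(E)| = 0` is residual (comeager) in `Γ₁(H)`. -/
theorem residual_of_halving {H : Type*} [NormedAddCommGroup H]
    [InnerProductSpace ℝ H] [CompleteSpace H] (E : Set H)
    (hyp : ∀ f₀ : Gamma1 H, ∀ ρ : ℝ, 0 < ρ →
      ∃ g₀ : Gamma1 H, ∃ σ : ℝ, 0 < σ ∧ Metric.ball g₀ σ ⊆ Metric.ball f₀ ρ ∧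
        (⨆ f ∈ Metric.ball g₀ σ, Gamma1.measOn f E) ≤
          (1 / 2) * ⨆ f ∈ Metric.ball f₀ ρ, Gamma1.measOn f E) :
    {γ : Gamma1 H | Gamma1.measOn γ E = 0} ∈ residual (Gamma1 H) := by

  classical
  -- each curve spends outer measure at most 1 in E
  have hle1 : ∀ γ : Gamma1 H, Gamma1.measOn γ E ≤ 1 := by
    intro γ
    have hsub : (Subtype.val '' (⇑γ.1.1 ⁻¹' E)) ⊆ Icc (0:ℝ) 1 :=
      Subtype.coe_image_subset _ _
    calc Gamma1.measOn γ E ≤ volume (Icc (0:ℝ) 1) := measure_mono hsub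
      _ = 1 := by simp
  have hsup1 : ∀ (g : Gamma1 H) (σ : ℝ),
      (⨆ f ∈ Metric.ball g σ, Gamma1.measOn f E) ≤ 1 := by
    intro g σ
    exact iSup₂_le fun f _ => hle1 f
  -- iterate the hypothesis
  have claim : ∀ n : ℕ, ∀ f₀ : Gamma1 H, ∀ ρ : ℝ, 0 < ρ →
      ∃ g₀ : Gamma1 H, ∃ σ : ℝ, 0 < σ ∧ Metric.ball g₀ σ ⊆ Metric.ball f₀ ρ ∧
        (⨆ f ∈ Metric.ball g₀ σ, Gamma1.measOn f E) ≤ (2⁻¹ : ℝ≥0∞) ^ n := by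
    intro n
    induction n with
    | zero =>
      intro f₀ ρ hρ
      exact ⟨f₀, ρ, hρ, subset_rfl, by simpa using hsup1 f₀ ρ⟩
    | succ n ih =>
      intro f₀ ρ hρ
      obtain ⟨g₀, σ, hσ, hsub, hbd⟩ := ih f₀ ρ hρ
      obtain ⟨h₀, τ, hτ, hsub2, hbd2⟩ := hyp g₀ σ hσ
      refine ⟨h₀, τ, hτ, hsub2.trans hsub, ?_⟩
      calc (⨆ f ∈ Metric.ball h₀ τ, Gamma1.measOn f E)
          ≤ (1 / 2) * ⨆ f ∈ Metric.ball g₀ σ, Gamma1.measOn f E := hbd2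
        _ ≤ (1 / 2) * (2⁻¹ : ℝ≥0∞) ^ n := by
            exact mul_le_mul_right hbd _
        _ = (2⁻¹ : ℝ≥0∞) ^ (n + 1) := by
            rw [pow_succ, one_div, mul_comm]
  -- the open dense sets
  set G : ℕ → Set (Gamma1 H) := fun n =>
    ⋃ (p : Gamma1 H × ℝ)
      (_ : (⨆ f ∈ Metric.ball p.1 p.2, Gamma1.measOn f E) ≤ (2⁻¹ : ℝ≥0∞) ^ n),
      Metric.ball p.1 p.2 with hG
  have hopen : ∀ n, IsOpen (G n) := fun n =>
    isOpen_iUnion fun p => isOpen_iUnion fun _ => isOpen_ball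
  have hdense : ∀ n, Dense (G n) := by
    intro n
    rw [Metric.dense_iff]
    intro x r hr
    obtain ⟨g₀, σ, hσ, hsub, hbd⟩ := claim n x r hr
    refine ⟨g₀, hsub (mem_ball_self hσ), ?_⟩
    exact mem_iUnion.2 ⟨(g₀, σ), mem_iUnion.2 ⟨hbd, mem_ball_self hσ⟩⟩
  have hGres : (⋂ n, G n) ∈ residual (Gamma1 H) := by
    refine (countable_iInter_mem.2 ?_)
    intro n
    exact residual_of_dense_open (hopen n) (hdense n)
  refine Filter.mem_of_superset hGres ?_
  intro γ hγ
  simp only [mem_iInter] at hγ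
  have key : ∀ n : ℕ, Gamma1.measOn γ E ≤ (2⁻¹ : ℝ≥0∞) ^ n := by
    intro n
    obtain ⟨p, hp⟩ := mem_iUnion.1 (hγ n)
    obtain ⟨hbd, hmem⟩ := mem_iUnion.1 hp
    exact le_trans (le_iSup₂ (f := fun f (_ : f ∈ Metric.ball p.1 p.2) =>
      Gamma1.measOn f E) γ hmem) hbd
  have h0 : Gamma1.measOn γ E ≤ 0 := by
    have htend : Filter.Tendsto (fun n : ℕ => (2⁻¹ : ℝ≥0∞) ^ n)
        Filter.atTop (𝓝 0) :=
      ENNReal.tendsto_pow_atTop_nhds_zero_of_lt_one (by norm_num)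
    exact ge_of_tendsto' htend key
  exact le_antisymm h0 zero_le


end
end

section
/- Let H be a real Hilbert space, λ > 0 and N ≥ 2. For each n = 1, …, N−1 let {I_k^{(n)}}_{k=1}^{K_n} be a finite collection of pairwise disjoint closed subintervals of (0,1), and let φ_n : [0,1] → H be a Lipschitz map such that: φ_n(t) = 0 for all t outside ⋃_k I_k^{(n)}; ∫_{I_k^{(n)}} φ_n'(t) dt = 0 for every k; ‖φ_n'(t)‖ ≤ 1/λ for almost every t; and for every m < n, the derivative φ_m' is almost everywhere constant on each interval I_k^{(n)}. Then for every κ > 0, the Lebesgue measure of the set {t ∈ [0,1] : max_{1≤n≤N} ‖Σ_{i=1}^{n−1} φ_i'(t)‖ ≥ κ} is at most N/(λ²κ²). -/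
open Set MeasureTheory Metric Topology

noncomputable section

private lemma integrableOn_of_bound' {E : Type*} [NormedAddCommGroup E] {g : ℝ → E} {D : ℝ}
    (hm : AEStronglyMeasurable g (volume : Measure ℝ))
    (hb : ∀ᵐ t ∂(volume : Measure ℝ), ‖g t‖ ≤ D)
    {s : Set ℝ} (hs : s ⊆ Icc (0:ℝ) 1) : IntegrableOn g s volume := by
  refine Integrable.mono' (g := fun _ => D) ?_ hm.restrict (ae_restrict_of_ae hb)
  refine integrableOn_const (ne_of_lt ?_)
  exact lt_of_le_of_lt (measure_mono hs) measure_Icc_lt_top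

private lemma ortho_aux {H : Type*} [NormedAddCommGroup H] [InnerProductSpace ℝ H]
    [CompleteSpace H]
    {Kj : ℕ} {aj bj : ℕ → ℝ} {ψ g : ℝ → H} {C D : ℝ} (hD : 0 ≤ D)
    (hsub : ∀ k < Kj, aj k < bj k ∧ Icc (aj k) (bj k) ⊆ Ioo (0:ℝ) 1)
    (hdisj : ∀ k < Kj, ∀ l < Kj, k ≠ l → Disjoint (Icc (aj k) (bj k)) (Icc (aj l) (bj l)))
    (hψm : AEStronglyMeasurable ψ (volume : Measure ℝ))
    (hψ0 : ∀ t, t ∉ (⋃ k < Kj, Icc (aj k) (bj k)) → ψ t = 0)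
    (hψint : ∀ k < Kj, (∫ t in Icc (aj k) (bj k), ψ t) = 0)
    (hψb : ∀ᵐ t ∂(volume : Measure ℝ), ‖ψ t‖ ≤ C)
    (hgm : AEStronglyMeasurable g (volume : Measure ℝ))
    (hgb : ∀ᵐ t ∂(volume : Measure ℝ), ‖g t‖ ≤ D)
    (hgc : ∀ k < Kj, ∃ w : H, ∀ᵐ t ∂(volume : Measure ℝ),
      t ∈ Icc (aj k) (bj k) → g t = w) :
    (∫ t in Icc (0:ℝ) 1, (inner ℝ (g t) (ψ t) : ℝ)) = 0 := by
  set U : Set ℝ := ⋃ k < Kj, Icc (aj k) (bj k) with hU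
  set h : ℝ → ℝ := fun t => (inner ℝ (g t) (ψ t) : ℝ) with hh
  have hUm : MeasurableSet U := MeasurableSet.biUnion (to_countable _)
    fun k _ => measurableSet_Icc
  have hUsub : U ⊆ Icc (0:ℝ) 1 := by
    refine iUnion₂_subset fun k hk => (hsub k hk).2.trans Ioo_subset_Icc_self
  have hhm : AEStronglyMeasurable h (volume : Measure ℝ) := hgm.inner hψm
  have hhb : ∀ᵐ t ∂(volume : Measure ℝ), ‖h t‖ ≤ D * C := by
    filter_upwards [hψb, hgb] with t h1 h2
    calc ‖h t‖ ≤ ‖g t‖ * ‖ψ t‖ := norm_inner_le_norm _ _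
      _ ≤ D * C := mul_le_mul h2 h1 (norm_nonneg _) hD
  have hhint : ∀ s : Set ℝ, s ⊆ Icc (0:ℝ) 1 → IntegrableOn h s volume :=
    fun s hs => integrableOn_of_bound' hhm hhb hs
  have hind : h = U.indicator h := by
    funext t
    by_cases ht : t ∈ U
    · rw [indicator_of_mem ht]
    · rw [indicator_of_notMem ht, hh]
      simp [hψ0 t ht]
  have step1 : (∫ t in Icc (0:ℝ) 1, h t) = ∫ t in U, h t := by
    conv_lhs => rw [hind]
    rw [integral_indicator hUm, Measure.restrict_restrict hUm, inter_eq_left.2 hUsub]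
  have step2 : (∫ t in U, h t) = ∑ k ∈ Finset.range Kj, ∫ t in Icc (aj k) (bj k), h t := by
    have hU' : U = ⋃ k ∈ Finset.range Kj, Icc (aj k) (bj k) := by
      simp [hU, Finset.mem_range]
    rw [hU']
    refine integral_biUnion_finset _ (fun k _ => measurableSet_Icc) ?_ ?_
    · intro k hk l hl hkl
      exact hdisj k (Finset.mem_range.1 hk) l (Finset.mem_range.1 hl) hkl
    · intro k hk
      exact hhint _ (((hsub k (Finset.mem_range.1 hk)).2).trans Ioo_subset_Icc_self)
  have step3 : ∀ k < Kj, (∫ t in Icc (aj k) (bj k), h t) = 0 := by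
    intro k hk
    obtain ⟨w, hw⟩ := hgc k hk
    have hψI : IntegrableOn ψ (Icc (aj k) (bj k)) volume :=
      integrableOn_of_bound' hψm hψb (((hsub k hk).2).trans Ioo_subset_Icc_self)
    have : (∫ t in Icc (aj k) (bj k), h t)
        = ∫ t in Icc (aj k) (bj k), (inner ℝ w (ψ t) : ℝ) := by
      refine setIntegral_congr_ae measurableSet_Icc ?_
      filter_upwards [hw] with t hwt htI
      rw [hh]; simp only [hwt htI]
    rw [this, integral_inner hψI w, hψint k hk, inner_zero_right]
  rw [step1, step2]
  exact Finset.sum_eq_zero fun k hk => step3 k (Finset.mem_range.1 hk)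

/-- A Kolmogorov-type maximal estimate: if for `n = 1, …, N−1` each
Lipschitz `φ_n : [0,1] → H` vanishes outside a finite disjoint union of closed intervals
`I_k^{(n)} ⊆ (0,1)`, has `∫_{I_k^{(n)}} φ_n' = 0` for every `k`, satisfies
`‖φ_n'‖ ≤ 1/λ` a.e., and `φ_m'` is a.e. constant on each `I_k^{(n)}` for all `m < n`,
then for every `κ > 0` the measure of
`{t ∈ [0,1] : max_{1 ≤ n ≤ N} ‖Σ_{i=1}^{n−1} φ_i'(t)‖ ≥ κ}` is at most `N/(λ²κ²)`. -/
theorem maximal_estimate {H : Type*} [NormedAddCommGroup H]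
    [InnerProductSpace ℝ H] [CompleteSpace H] {lam : ℝ} (hlam : 0 < lam)
    {N : ℕ} (hN : 2 ≤ N)
    {K : ℕ → ℕ} {a b : ℕ → ℕ → ℝ} {φ : ℕ → ℝ → H} {L : ℕ → NNReal}
    (hLip : ∀ n, 1 ≤ n → n ≤ N - 1 → LipschitzWith (L n) (φ n))
    (hsub : ∀ n, 1 ≤ n → n ≤ N - 1 → ∀ k < K n,
      a n k < b n k ∧ Icc (a n k) (b n k) ⊆ Ioo (0:ℝ) 1)
    (hdisj : ∀ n, 1 ≤ n → n ≤ N - 1 → ∀ k < K n, ∀ l < K n, k ≠ l →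
      Disjoint (Icc (a n k) (b n k)) (Icc (a n l) (b n l)))
    (hzero : ∀ n, 1 ≤ n → n ≤ N - 1 → ∀ t : ℝ,
      t ∉ (⋃ k < K n, Icc (a n k) (b n k)) → φ n t = 0)
    (hint : ∀ n, 1 ≤ n → n ≤ N - 1 → ∀ k < K n,
      (∫ t in Icc (a n k) (b n k), deriv (φ n) t) = 0)
    (hbdd : ∀ n, 1 ≤ n → n ≤ N - 1 →
      ∀ᵐ t ∂(volume : Measure ℝ), ‖deriv (φ n) t‖ ≤ 1 / lam)
    (hconst : ∀ m n, 1 ≤ m → m < n → n ≤ N - 1 → ∀ k < K n, ∃ v : H,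
      ∀ᵐ t ∂(volume : Measure ℝ), t ∈ Icc (a n k) (b n k) → deriv (φ m) t = v)
    {κ : ℝ} (hκ : 0 < κ) :
    volume {t ∈ Icc (0:ℝ) 1 |
        ∃ n, 1 ≤ n ∧ n ≤ N ∧ κ ≤ ‖∑ i ∈ Finset.Icc 1 (n - 1), deriv (φ i) t‖} ≤
      ENNReal.ofReal (N / (lam ^ 2 * κ ^ 2)) := by
  classical
  have hIccIoc : ∀ m : ℕ, Finset.Icc 1 m = Finset.Ioc 0 m := by
    intro m; ext x; simp only [Finset.mem_Icc, Finset.mem_Ioc]; omega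
  set f : ℕ → ℝ → H := fun i => deriv (φ i) with hfdef
  set Sm : ℕ → ℝ → H := fun n t => ∑ i ∈ Finset.Ioc 0 n, f i t with hSmdef
  have hfm : ∀ i, StronglyMeasurable (f i) := fun i => stronglyMeasurable_deriv (φ i)
  have hSmm : ∀ n, StronglyMeasurable (Sm n) := fun n =>
    Finset.stronglyMeasurable_fun_sum _ fun i _ => hfm i
  -- a.e. bound for sums
  have hsum_b : ∀ s : Finset ℕ, (∀ i ∈ s, 1 ≤ i ∧ i ≤ N - 1) →
      ∀ᵐ t ∂(volume : Measure ℝ), ‖∑ i ∈ s, f i t‖ ≤ s.card / lam := by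
    intro s hs
    have h1 : ∀ᵐ t ∂(volume : Measure ℝ), ∀ i : ℕ, i ∈ s → ‖f i t‖ ≤ 1 / lam := by
      rw [ae_all_iff]
      intro i
      by_cases hi : i ∈ s
      · filter_upwards [hbdd i (hs i hi).1 (hs i hi).2] with t ht _; exact ht
      · filter_upwards with t hi'; exact absurd hi' hi
    filter_upwards [h1] with t ht
    calc ‖∑ i ∈ s, f i t‖ ≤ ∑ i ∈ s, ‖f i t‖ := norm_sum_le _ _
      _ ≤ ∑ _i ∈ s, (1 / lam) := Finset.sum_le_sum ht
      _ = s.card / lam := by rw [Finset.sum_const, nsmul_eq_mul]; ring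
  have hSb : ∀ n, n ≤ N - 1 → ∀ᵐ t ∂(volume : Measure ℝ), ‖Sm n t‖ ≤ (n : ℝ) / lam := by
    intro n hn
    have := hsum_b (Finset.Ioc 0 n) (fun i hi => by
      rcases Finset.mem_Ioc.1 hi with ⟨h1, h2⟩; exact ⟨h1, le_trans h2 hn⟩)
    simpa [Nat.card_Ioc] using this
  -- measurability and integrability helpers
  have hsqm : ∀ u : ℝ → H, StronglyMeasurable u → StronglyMeasurable fun t => ‖u t‖ ^ 2 := by
    intro u hu
    have h2 : StronglyMeasurable fun t => ‖u t‖ * ‖u t‖ := hu.norm.mul hu.norm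
    simpa [pow_two] using h2
  have hsq_int : ∀ (u : ℝ → H) (Cu : ℝ), StronglyMeasurable u →
      (∀ᵐ t ∂(volume : Measure ℝ), ‖u t‖ ≤ Cu) → ∀ s : Set ℝ, s ⊆ Icc (0:ℝ) 1 →
      IntegrableOn (fun t => ‖u t‖ ^ 2) s volume := by
    intro u Cu hu hub s hs
    refine integrableOn_of_bound' (D := Cu ^ 2) (hsqm u hu).aestronglyMeasurable ?_ hs
    filter_upwards [hub] with t ht
    rw [Real.norm_of_nonneg (by positivity)]
    exact pow_le_pow_left₀ (norm_nonneg _) ht 2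
  have hinner_int : ∀ (u v : ℝ → H) (Cu Cv : ℝ), 0 ≤ Cu → StronglyMeasurable u →
      StronglyMeasurable v → (∀ᵐ t ∂(volume : Measure ℝ), ‖u t‖ ≤ Cu) →
      (∀ᵐ t ∂(volume : Measure ℝ), ‖v t‖ ≤ Cv) → ∀ s : Set ℝ, s ⊆ Icc (0:ℝ) 1 →
      IntegrableOn (fun t => (inner ℝ (u t) (v t) : ℝ)) s volume := by
    intro u v Cu Cv hCu hu hv hub hvb s hs
    refine integrableOn_of_bound' (D := Cu * Cv)
      (hu.aestronglyMeasurable.inner hv.aestronglyMeasurable) ?_ hs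
    filter_upwards [hub, hvb] with t h1 h2
    calc ‖(inner ℝ (u t) (v t) : ℝ)‖ ≤ ‖u t‖ * ‖v t‖ := norm_inner_le_norm _ _
      _ ≤ Cu * Cv := mul_le_mul h1 h2 (norm_nonneg _) hCu
  have hsq_bound : ∀ (u : ℝ → H) (Cu : ℝ), 0 ≤ Cu → StronglyMeasurable u →
      (∀ᵐ t ∂(volume : Measure ℝ), ‖u t‖ ≤ Cu) →
      (∫ t in Icc (0:ℝ) 1, ‖u t‖ ^ 2) ≤ Cu ^ 2 := by
    intro u Cu hCu hu hub
    have hInt : IntegrableOn (fun t => ‖u t‖ ^ 2) (Icc (0:ℝ) 1) volume :=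
      hsq_int u Cu hu hub _ Subset.rfl
    have hb : ∀ᵐ t ∂(volume.restrict (Icc (0:ℝ) 1)), ‖u t‖ ^ 2 ≤ Cu ^ 2 := by
      filter_upwards [ae_restrict_of_ae hub] with t ht
      exact pow_le_pow_left₀ (norm_nonneg _) ht 2
    calc (∫ t in Icc (0:ℝ) 1, ‖u t‖ ^ 2) ≤ ∫ _t in Icc (0:ℝ) 1, Cu ^ 2 :=
        integral_mono_ae hInt (integrableOn_const measure_Icc_lt_top.ne) hb
      _ = Cu ^ 2 := by rw [setIntegral_const]; simp [Real.volume_Icc]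
  -- the first-exceedance sets
  set A : ℕ → Set ℝ := fun n =>
    {t | t ∈ Icc (0:ℝ) 1 ∧ κ ≤ ‖Sm n t‖ ∧ ∀ m, m < n → ‖Sm m t‖ < κ} with hAdef
  have hAm : ∀ n, MeasurableSet (A n) := by
    intro n
    have hA' : A n = (Icc (0:ℝ) 1 ∩ {t | κ ≤ ‖Sm n t‖}) ∩ ⋂ m ∈ Iio n, {t | ‖Sm m t‖ < κ} := by
      ext t
      simp only [hAdef, mem_setOf_eq, mem_inter_iff, mem_iInter, mem_Iio]
      tauto
    rw [hA']
    have hm1 : ∀ m : ℕ, Measurable fun t => ‖Sm m t‖ := fun m => (hSmm m).norm.measurable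
    exact (measurableSet_Icc.inter (measurableSet_le measurable_const (hm1 n))).inter
      (MeasurableSet.biInter (to_countable _) fun m _ => measurableSet_lt (hm1 m) measurable_const)
  have hAsub : ∀ n, A n ⊆ Icc (0:ℝ) 1 := fun n t ht => ht.1
  have hAfin : ∀ n, volume (A n) ≠ ⊤ :=
    fun n => ne_of_lt (lt_of_le_of_lt (measure_mono (hAsub n)) measure_Icc_lt_top)
  -- inclusion of the target set
  have hEsub : {t ∈ Icc (0:ℝ) 1 |
        ∃ n, 1 ≤ n ∧ n ≤ N ∧ κ ≤ ‖∑ i ∈ Finset.Icc 1 (n - 1), deriv (φ i) t‖}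
      ⊆ ⋃ n ∈ Finset.Ioc 0 (N - 1), A n := by
    rintro t ⟨ht01, n0, hn01, hn0N, hn0⟩
    rw [hIccIoc] at hn0
    have hn0' : κ ≤ ‖Sm (n0 - 1) t‖ := hn0
    have hP : ∃ m, κ ≤ ‖Sm m t‖ := ⟨n0 - 1, hn0'⟩
    have hms : κ ≤ ‖Sm (Nat.find hP) t‖ := Nat.find_spec hP
    have hmle : Nat.find hP ≤ n0 - 1 := Nat.find_min' hP hn0'
    have hm1 : 1 ≤ Nat.find hP := by
      rcases Nat.eq_zero_or_pos (Nat.find hP) with h0 | h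
      · exfalso
        rw [h0] at hms
        simp only [hSmdef, Finset.Ioc_self, Finset.sum_empty, norm_zero] at hms
        linarith
      · exact h
    refine mem_biUnion (Finset.mem_Ioc.2 ⟨hm1, le_trans hmle (by omega)⟩) ?_
    exact ⟨ht01, hms, fun m' hm' => lt_of_not_ge (Nat.find_min hP hm')⟩
  -- disjointness
  have hApd : ∀ n n', n < n' → Disjoint (A n) (A n') := by
    intro n n' hlt
    rw [Set.disjoint_left]
    rintro t ⟨_, h2, _⟩ ⟨_, _, h3⟩
    exact absurd h2 (not_le.2 (h3 n hlt))
  -- orthogonality wrapper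
  have horth : ∀ j, 1 ≤ j → j ≤ N - 1 → ∀ (g : ℝ → H) (D : ℝ), 0 ≤ D →
      AEStronglyMeasurable g (volume : Measure ℝ) →
      (∀ᵐ t ∂(volume : Measure ℝ), ‖g t‖ ≤ D) →
      (∀ k < K j, ∃ w : H, ∀ᵐ t ∂(volume : Measure ℝ),
        t ∈ Icc (a j k) (b j k) → g t = w) →
      (∫ t in Icc (0:ℝ) 1, (inner ℝ (g t) (f j t) : ℝ)) = 0 := by
    intro j hj1 hj2 g D hD hgm hgb hgc
    refine ortho_aux hD (hsub j hj1 hj2) (hdisj j hj1 hj2)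
      (hfm j).aestronglyMeasurable ?_ (hint j hj1 hj2) (hbdd j hj1 hj2) hgm hgb hgc
    intro t ht
    have hUcl : IsClosed (⋃ k < K j, Icc (a j k) (b j k)) :=
      (Set.finite_Iio (K j)).isClosed_biUnion fun k _ => isClosed_Icc
    have hev : φ j =ᶠ[𝓝 t] fun _ => (0 : H) := by
      filter_upwards [hUcl.isOpen_compl.mem_nhds ht] with s hs
      exact hzero j hj1 hj2 s hs
    show deriv (φ j) t = 0
    rw [hev.deriv_eq]
    exact deriv_const t 0
  -- cross terms vanish
  have hcross : ∀ i j, 1 ≤ i → i ≤ N - 1 → 1 ≤ j → j ≤ N - 1 → i ≠ j →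
      (∫ t in Icc (0:ℝ) 1, (inner ℝ (f i t) (f j t) : ℝ)) = 0 := by
    intro i j hi1 hi2 hj1 hj2 hij
    rcases hij.lt_or_gt with h | h
    · exact horth j hj1 hj2 (f i) (1 / lam) (by positivity)
        (hfm i).aestronglyMeasurable (hbdd i hi1 hi2) (fun k hk => hconst i j hi1 h hj2 k hk)
    · calc (∫ t in Icc (0:ℝ) 1, (inner ℝ (f i t) (f j t) : ℝ))
          = ∫ t in Icc (0:ℝ) 1, (inner ℝ (f j t) (f i t) : ℝ) :=
            integral_congr_ae (Filter.Eventually.of_forall fun t => real_inner_comm _ _)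
        _ = 0 := horth i hi1 hi2 (f j) (1 / lam) (by positivity)
            (hfm j).aestronglyMeasurable (hbdd j hj1 hj2)
            (fun k hk => hconst j i hj1 h hi2 k hk)
  have hN1 : (N - 1 : ℕ) ≤ N - 1 := le_rfl
  -- L² bound for the full sum
  have hL2 : (∫ t in Icc (0:ℝ) 1, ‖Sm (N - 1) t‖ ^ 2) ≤ ((N - 1 : ℕ) : ℝ) / lam ^ 2 := by
    have hmem : ∀ i ∈ Finset.Ioc 0 (N - 1), 1 ≤ i ∧ i ≤ N - 1 :=
      fun i hi => Finset.mem_Ioc.1 hi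
    have hTb : ∀ᵐ t ∂(volume : Measure ℝ), ‖Sm (N - 1) t‖ ≤ ((N - 1 : ℕ) : ℝ) / lam :=
      hSb (N - 1) le_rfl
    have h1 : (∫ t in Icc (0:ℝ) 1, ‖Sm (N - 1) t‖ ^ 2)
        = ∑ i ∈ Finset.Ioc 0 (N - 1), ∫ t in Icc (0:ℝ) 1, (inner ℝ (f i t) (Sm (N - 1) t) : ℝ) := by
      rw [integral_congr_ae (Filter.Eventually.of_forall fun t => ?_),
        integral_finset_sum _ (fun i hi => hinner_int (f i) (Sm (N - 1)) (1 / lam)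
          (((N - 1 : ℕ) : ℝ) / lam) (by positivity) (hfm i) (hSmm (N - 1))
          (hbdd i (hmem i hi).1 (hmem i hi).2) hTb _ Subset.rfl)]
      rw [← real_inner_self_eq_norm_sq]
      exact sum_inner _ _ _
    rw [h1]
    have h2 : ∀ i ∈ Finset.Ioc 0 (N - 1),
        (∫ t in Icc (0:ℝ) 1, (inner ℝ (f i t) (Sm (N - 1) t) : ℝ)) ≤ (1 / lam) ^ 2 := by
      intro i hi
      obtain ⟨hi1, hi2⟩ := hmem i hi
      have h3 : (∫ t in Icc (0:ℝ) 1, (inner ℝ (f i t) (Sm (N - 1) t) : ℝ))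
          = ∑ j ∈ Finset.Ioc 0 (N - 1), ∫ t in Icc (0:ℝ) 1, (inner ℝ (f i t) (f j t) : ℝ) := by
        rw [integral_congr_ae (Filter.Eventually.of_forall fun t => ?_),
          integral_finset_sum _ (fun j hj => hinner_int (f i) (f j) (1 / lam) (1 / lam)
            (by positivity) (hfm i) (hfm j) (hbdd i hi1 hi2)
            (hbdd j (hmem j hj).1 (hmem j hj).2) _ Subset.rfl)]
        exact inner_sum _ _ _
      rw [h3, Finset.sum_eq_single_of_mem i hi
        (fun j hj hji => hcross i j hi1 hi2 (hmem j hj).1 (hmem j hj).2 (Ne.symm hji))]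
      have h4 : (∫ t in Icc (0:ℝ) 1, (inner ℝ (f i t) (f i t) : ℝ))
          = ∫ t in Icc (0:ℝ) 1, ‖f i t‖ ^ 2 :=
        integral_congr_ae (Filter.Eventually.of_forall fun t => real_inner_self_eq_norm_sq _)
      rw [h4]
      exact hsq_bound (f i) (1 / lam) (by positivity) (hfm i) (hbdd i hi1 hi2)
    calc (∑ i ∈ Finset.Ioc 0 (N - 1), ∫ t in Icc (0:ℝ) 1, (inner ℝ (f i t) (Sm (N - 1) t) : ℝ))
        ≤ ∑ _i ∈ Finset.Ioc 0 (N - 1), (1 / lam) ^ 2 := Finset.sum_le_sum h2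
      _ = ((N - 1 : ℕ) : ℝ) / lam ^ 2 := by
        rw [Finset.sum_const, nsmul_eq_mul, Nat.card_Ioc, Nat.sub_zero]
        ring
  -- per-n key estimate
  have hkey : ∀ n ∈ Finset.Ioc 0 (N - 1),
      κ ^ 2 * (volume (A n)).toReal ≤ ∫ t in A n, ‖Sm (N - 1) t‖ ^ 2 := by
    intro n hn
    obtain ⟨hn1, hn2⟩ := Finset.mem_Ioc.1 hn
    have hSnb : ∀ᵐ t ∂(volume : Measure ℝ), ‖Sm n t‖ ≤ (n : ℝ) / lam := hSb n hn2
    -- Chebyshev part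
    have cheb : κ ^ 2 * (volume (A n)).toReal ≤ ∫ t in A n, ‖Sm n t‖ ^ 2 := by
      rw [mul_comm, ← smul_eq_mul]
      refine setIntegral_ge_of_const_le (hAm n) (hAfin n) ?_ ?_
      · intro t ht
        exact pow_le_pow_left₀ hκ.le ht.2.1 2
      · exact hsq_int (Sm n) ((n : ℝ) / lam) (hSmm n) hSnb _ (hAsub n)
    -- remaining part R
    set R : ℝ → H := fun t => ∑ j ∈ Finset.Ioc n (N - 1), f j t with hRdef
    have hRm : StronglyMeasurable R := Finset.stronglyMeasurable_fun_sum _ fun j _ => hfm j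
    have hRb : ∀ᵐ t ∂(volume : Measure ℝ),
        ‖R t‖ ≤ ((Finset.Ioc n (N - 1)).card : ℝ) / lam :=
      hsum_b _ (fun j hj => by
        rcases Finset.mem_Ioc.1 hj with ⟨h1, h2⟩; exact ⟨by omega, h2⟩)
    -- orthogonality: the increments are orthogonal to A n
    have hog : ∀ j ∈ Finset.Ioc n (N - 1),
        (∫ t in A n, (inner ℝ (Sm n t) (f j t) : ℝ)) = 0 := by
      intro j hj
      obtain ⟨hj1, hj2⟩ := Finset.mem_Ioc.1 hj
      have hj1' : 1 ≤ j := by omega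
      set g : ℝ → H := (A n).indicator (Sm n) with hgdef
      have hgm : AEStronglyMeasurable g volume :=
        ((hSmm n).indicator (hAm n)).aestronglyMeasurable
      have hgb : ∀ᵐ t ∂(volume : Measure ℝ), ‖g t‖ ≤ (n : ℝ) / lam := by
        filter_upwards [hSnb] with t ht
        exact le_trans (norm_indicator_le_norm_self _ _) ht
      have hgc : ∀ k < K j, ∃ w : H, ∀ᵐ t ∂(volume : Measure ℝ),
          t ∈ Icc (a j k) (b j k) → g t = w := by
        intro k hk
        have hIsub : Icc (a j k) (b j k) ⊆ Icc (0:ℝ) 1 :=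
          ((hsub j hj1' hj2 k hk).2).trans Ioo_subset_Icc_self
        have hvs : ∀ i : ℕ, ∃ v : H, i ∈ Finset.Ioc 0 n →
            ∀ᵐ t ∂(volume : Measure ℝ), t ∈ Icc (a j k) (b j k) → f i t = v := by
          intro i
          by_cases hi : i ∈ Finset.Ioc 0 n
          · obtain ⟨hi1, hi2⟩ := Finset.mem_Ioc.1 hi
            obtain ⟨v, hv⟩ := hconst i j hi1 (lt_of_le_of_lt hi2 hj1) hj2 k hk
            exact ⟨v, fun _ => hv⟩
          · exact ⟨0, fun h => absurd h hi⟩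
        choose v hv using hvs
        have hae : ∀ᵐ t ∂(volume : Measure ℝ), ∀ i : ℕ, i ∈ Finset.Ioc 0 n →
            t ∈ Icc (a j k) (b j k) → f i t = v i := by
          rw [ae_all_iff]
          intro i
          by_cases hi : i ∈ Finset.Ioc 0 n
          · filter_upwards [hv i hi] with t ht _ htI; exact ht htI
          · filter_upwards with t hi' _; exact absurd hi' hi
        set W : ℕ → H := fun m => ∑ i ∈ Finset.Ioc 0 m, v i with hWdef
        by_cases hc : κ ≤ ‖W n‖ ∧ ∀ m, m < n → ‖W m‖ < κ
        · refine ⟨W n, ?_⟩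
          filter_upwards [hae] with t ht htI
          have hSeq : ∀ m, m ≤ n → Sm m t = W m := fun m hm =>
            Finset.sum_congr rfl fun i hi =>
              ht i (Finset.Ioc_subset_Ioc le_rfl hm hi) htI
          have htA : t ∈ A n := by
            refine ⟨hIsub htI, ?_, ?_⟩
            · rw [hSeq n le_rfl]; exact hc.1
            · intro m hm; rw [hSeq m hm.le]; exact hc.2 m hm
          rw [hgdef, indicator_of_mem htA, hSeq n le_rfl]
        · refine ⟨0, ?_⟩
          filter_upwards [hae] with t ht htI
          have hSeq : ∀ m, m ≤ n → Sm m t = W m := fun m hm =>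
            Finset.sum_congr rfl fun i hi =>
              ht i (Finset.Ioc_subset_Ioc le_rfl hm hi) htI
          have htA : t ∉ A n := by
            rintro ⟨_, h1, h2⟩
            refine hc ⟨?_, ?_⟩
            · rw [← hSeq n le_rfl]; exact h1
            · intro m hm; rw [← hSeq m hm.le]; exact h2 m hm
          rw [hgdef, indicator_of_notMem htA]
      have h0 : (∫ t in Icc (0:ℝ) 1, (inner ℝ (g t) (f j t) : ℝ)) = 0 :=
        horth j hj1' hj2 g ((n : ℝ) / lam) (by positivity) hgm hgb hgc
      have hconv : (∫ t in Icc (0:ℝ) 1, (inner ℝ (g t) (f j t) : ℝ))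
          = ∫ t in A n, (inner ℝ (Sm n t) (f j t) : ℝ) := by
        have hid : (fun t => (inner ℝ (g t) (f j t) : ℝ))
            = (A n).indicator (fun t => (inner ℝ (Sm n t) (f j t) : ℝ)) := by
          funext t
          by_cases ht : t ∈ A n
          · rw [hgdef, indicator_of_mem ht, indicator_of_mem ht]
          · rw [hgdef, indicator_of_notMem ht, indicator_of_notMem ht]
            simp
        rw [hid, integral_indicator (hAm n), Measure.restrict_restrict (hAm n),
          inter_eq_left.2 (hAsub n)]
      rw [← hconv]; exact h0
    -- expansion
    have hTR : ∀ t, Sm (N - 1) t = Sm n t + R t := fun t =>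
      (Finset.sum_Ioc_consecutive _ (Nat.zero_le n) hn2).symm
    have hexp : ∀ t, ‖Sm (N - 1) t‖ ^ 2
        = ‖Sm n t‖ ^ 2 + 2 * (inner ℝ (Sm n t) (R t) : ℝ) + ‖R t‖ ^ 2 := fun t => by
      rw [hTR t]; exact norm_add_sq_real _ _
    have hint1 : IntegrableOn (fun t => ‖Sm n t‖ ^ 2) (A n) volume :=
      hsq_int (Sm n) ((n : ℝ) / lam) (hSmm n) hSnb _ (hAsub n)
    have hint2 : IntegrableOn (fun t => (inner ℝ (Sm n t) (R t) : ℝ)) (A n) volume :=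
      hinner_int (Sm n) R ((n : ℝ) / lam) _ (by positivity) (hSmm n) hRm hSnb hRb _ (hAsub n)
    have hint3 : IntegrableOn (fun t => ‖R t‖ ^ 2) (A n) volume :=
      hsq_int R _ hRm hRb _ (hAsub n)
    have e1 : (∫ t in A n, ‖Sm (N - 1) t‖ ^ 2)
        = (∫ t in A n, ‖Sm n t‖ ^ 2) + (∫ t in A n, 2 * (inner ℝ (Sm n t) (R t) : ℝ))
          + ∫ t in A n, ‖R t‖ ^ 2 := by
      have hint2' : IntegrableOn (fun t => 2 * (inner ℝ (Sm n t) (R t) : ℝ)) (A n) volume :=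
        hint2.const_mul 2
      have hint12 : IntegrableOn
          (fun t => ‖Sm n t‖ ^ 2 + 2 * (inner ℝ (Sm n t) (R t) : ℝ)) (A n) volume :=
        hint1.add hint2'
      rw [integral_congr_ae (Filter.Eventually.of_forall hexp)]
      rw [integral_add hint12 hint3, integral_add hint1 hint2']
    have e2 : (∫ t in A n, 2 * (inner ℝ (Sm n t) (R t) : ℝ)) = 0 := by
      have h5 : (∫ t in A n, (inner ℝ (Sm n t) (R t) : ℝ))
          = ∑ j ∈ Finset.Ioc n (N - 1), ∫ t in A n, (inner ℝ (Sm n t) (f j t) : ℝ) := by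
        rw [integral_congr_ae (Filter.Eventually.of_forall fun t => ?_),
          integral_finset_sum _ (fun j hj => hinner_int (Sm n) (f j) ((n : ℝ) / lam)
            (1 / lam) (by positivity) (hSmm n) (hfm j) hSnb
            (hbdd j (by rcases Finset.mem_Ioc.1 hj with ⟨h1, _⟩; omega)
              (Finset.mem_Ioc.1 hj).2) _ (hAsub n))]
        exact inner_sum _ _ _
      rw [integral_const_mul, h5, Finset.sum_eq_zero hog, mul_zero]
    have e3 : 0 ≤ ∫ t in A n, ‖R t‖ ^ 2 := integral_nonneg fun t => by positivity
    linarith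
  -- summation
  have hIA : IntegrableOn (fun t => ‖Sm (N - 1) t‖ ^ 2) (Icc (0:ℝ) 1) volume :=
    hsq_int (Sm (N - 1)) _ (hSmm (N - 1)) (hSb (N - 1) le_rfl) _ Subset.rfl
  have hsum : (∑ n ∈ Finset.Ioc 0 (N - 1), ∫ t in A n, ‖Sm (N - 1) t‖ ^ 2)
      ≤ ((N - 1 : ℕ) : ℝ) / lam ^ 2 := by
    have h1 : (∑ n ∈ Finset.Ioc 0 (N - 1), ∫ t in A n, ‖Sm (N - 1) t‖ ^ 2)
        = ∫ t in ⋃ n ∈ Finset.Ioc 0 (N - 1), A n, ‖Sm (N - 1) t‖ ^ 2 := by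
      refine (integral_biUnion_finset _ (fun n _ => hAm n) ?_
        (fun n _ => hIA.mono_set (hAsub n))).symm
      intro n _ m _ hnm
      rcases hnm.lt_or_gt with h | h
      · exact hApd _ _ h
      · exact (hApd _ _ h).symm
    have h2 : (∫ t in ⋃ n ∈ Finset.Ioc 0 (N - 1), A n, ‖Sm (N - 1) t‖ ^ 2)
        ≤ ∫ t in Icc (0:ℝ) 1, ‖Sm (N - 1) t‖ ^ 2 := by
      refine setIntegral_mono_set hIA ?_ ?_
      · filter_upwards with t; positivity
      · exact HasSubset.Subset.eventuallyLE (iUnion₂_subset fun n _ => hAsub n)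
    rw [h1]
    exact le_trans h2 hL2
  -- real-valued final bound
  have hreal : (∑ n ∈ Finset.Ioc 0 (N - 1), (volume (A n)).toReal)
      ≤ (N : ℝ) / (lam ^ 2 * κ ^ 2) := by
    have h1 : κ ^ 2 * ∑ n ∈ Finset.Ioc 0 (N - 1), (volume (A n)).toReal
        ≤ ((N - 1 : ℕ) : ℝ) / lam ^ 2 := by
      rw [Finset.mul_sum]
      exact le_trans (Finset.sum_le_sum hkey) hsum
    have h2 : ((N - 1 : ℕ) : ℝ) / lam ^ 2 ≤ (N : ℝ) / lam ^ 2 := by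
      gcongr
      exact_mod_cast Nat.sub_le N 1
    have h3 : κ ^ 2 * ∑ n ∈ Finset.Ioc 0 (N - 1), (volume (A n)).toReal
        ≤ (N : ℝ) / lam ^ 2 := le_trans h1 h2
    have hκ2 : (0:ℝ) < κ ^ 2 := by positivity
    rw [div_mul_eq_div_div]
    rw [le_div_iff₀ hκ2]
    linarith [h3]
  -- conclusion
  calc volume {t ∈ Icc (0:ℝ) 1 |
        ∃ n, 1 ≤ n ∧ n ≤ N ∧ κ ≤ ‖∑ i ∈ Finset.Icc 1 (n - 1), deriv (φ i) t‖}
      ≤ volume (⋃ n ∈ Finset.Ioc 0 (N - 1), A n) := measure_mono hEsub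
    _ ≤ ∑ n ∈ Finset.Ioc 0 (N - 1), volume (A n) := measure_biUnion_finset_le _ _
    _ = ENNReal.ofReal (∑ n ∈ Finset.Ioc 0 (N - 1), (volume (A n)).toReal) := by
        rw [ENNReal.ofReal_sum_of_nonneg (fun n _ => ENNReal.toReal_nonneg)]
        exact Finset.sum_congr rfl fun n _ => (ENNReal.ofReal_toReal (hAfin n)).symm
    _ ≤ ENNReal.ofReal ((N : ℝ) / (lam ^ 2 * κ ^ 2)) := ENNReal.ofReal_le_ofReal hreal

end
end
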